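/- arXiv:math/0404321 — 6 statements merged into one kernel-verified Lean document; each statement's English description precedes it below -/
import Mathlib

section
/- Let f : ℂ² → ℂ² preserve unit distance, with f((0,0)) = (0,0), f((1,0)) = (1,0) and f((0,1)) = (0,1). Then there exists a field homomorphism (ring homomorphism) ρ : ℝ → ℂ such that for all x₁, x₂ ∈ ℂ, f((x₁,x₂)) is equal to (ρ(Re x₁) + ρ(Im x₁)·i, ρ(Re x₂) + ρ(Im x₂)·i) or to (ρ(Re x₁) − ρ(Im x₁)·i, ρ(Re x₂) − ρ(Im x₂)·i). -/
namespace BQaux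
noncomputable section
open Complex

/-- The ambient space: `ℂ × ℂ` in "isotropic" coordinates. -/
abbrev V := ℂ × ℂ

/-- The quadratic form `v₁ * v₂`. -/
def qf (v : V) : ℂ := v.1 * v.2

/-- Unit vectors: `(s, s⁻¹)`. -/
def vc (s : ℂ) : V := (s, s⁻¹)

lemma qf_vc {s : ℂ} (hs : s ≠ 0) : qf (vc s) = 1 := by
  simp [qf, vc, mul_inv_cancel₀ hs]

lemma vc_neg (s : ℂ) : vc (-s) = - vc s := by
  simp [vc, Prod.ext_iff, inv_neg]

lemma qf_neg (v : V) : qf (-v) = qf v := by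
  simp [qf]

lemma qf_sub_comm (x y : V) : qf (x - y) = qf (y - x) := by
  rw [← qf_neg (x - y), neg_sub]

/-- Structure of unit vectors. -/
lemma unit_struct {v : V} (h : qf v = 1) : v.1 ≠ 0 ∧ v = vc (v.1) := by
  have h1 : v.1 * v.2 = 1 := h
  have hv1 : v.1 ≠ 0 := by
    intro h0; rw [h0, zero_mul] at h1; exact one_ne_zero h1.symm
  refine ⟨hv1, ?_⟩
  have h2 : v.2 = (v.1)⁻¹ := by
    field_simp
    linear_combination h1
  rw [vc, ← h2]

/-- Every complex quadratic with nonzero leading coefficient has a root. -/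
lemma exists_quad_root (a b c : ℂ) (ha : a ≠ 0) : ∃ x : ℂ, a*x^2 + b*x + c = 0 := by
  obtain ⟨e, he⟩ := IsAlgClosed.exists_pow_nat_eq (k := ℂ) (b^2 - 4*a*c) two_pos
  refine ⟨(-b + e)/(2*a), ?_⟩
  field_simp
  ring_nf
  ring_nf at he
  linear_combination he

/-- No four points of `ℂ²` are pairwise at `qf`-distance 1. -/
lemma K4 (P Q R S : V) (hPQ : qf (Q - P) = 1) (hPR : qf (R - P) = 1)
    (hPS : qf (S - P) = 1) (hQR : qf (R - Q) = 1) (hQS : qf (S - Q) = 1)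
    (hRS : qf (S - R) = 1) : False := by
  obtain ⟨hh, eQ⟩ := unit_struct hPQ
  obtain ⟨hg, eR⟩ := unit_struct hPR
  obtain ⟨hk, eS⟩ := unit_struct hPS
  set h := (Q - P).1 with hhdef
  set g := (R - P).1 with hgdef
  set k := (S - P).1 with hkdef
  -- rewrite the cross distances
  have dQR : R - Q = (g - h, g⁻¹ - h⁻¹) := by
    have : R - Q = (R - P) - (Q - P) := by ring
    rw [this, eR, eQ]; rfl
  have dQS : S - Q = (k - h, k⁻¹ - h⁻¹) := by
    have : S - Q = (S - P) - (Q - P) := by ring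
    rw [this, eS, eQ]; rfl
  have dRS : S - R = (k - g, k⁻¹ - g⁻¹) := by
    have : S - R = (S - P) - (R - P) := by ring
    rw [this, eS, eR]; rfl
  have e1 : g^2 - g*h + h^2 = 0 := by
    have := hQR; rw [dQR] at this
    simp only [qf] at this
    field_simp at this
    linear_combination -this
  have e2 : k^2 - k*h + h^2 = 0 := by
    have := hQS; rw [dQS] at this
    simp only [qf] at this
    field_simp at this
    linear_combination -this
  have e3 : k^2 - k*g + g^2 = 0 := by
    have := hRS; rw [dRS] at this
    simp only [qf] at this
    field_simp at this
    linear_combination -this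
  have hsplit : (g - k) * (g + k - h) = 0 := by linear_combination e1 - e2
  rcases mul_eq_zero.1 hsplit with hgk | hsum
  · -- g = k, so S = R, contradicting qf (S - R) = 1
    have hgk' : g = k := sub_eq_zero.1 hgk
    have : S - R = 0 := by rw [dRS, hgk']; simp
    rw [this] at hRS
    simp [qf] at hRS
  · have hk' : k = h - g := by linear_combination hsum
    have e4 : 3*g^2 - 3*g*h + h^2 = 0 := by
      rw [hk'] at e3; linear_combination e3
    have e5 : 2*g*(g - h) = 0 := by linear_combination e4 - e1
    have hgh : g = h := by
      rcases mul_eq_zero.1 e5 with h1 | h2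
      · exact absurd (by linear_combination h1/2 : g = 0) hg
      · linear_combination h2
    rw [hgh] at e1
    have : h^2 = 0 := by linear_combination e1
    exact hh (by simpa using pow_eq_zero_iff (n := 2) (by norm_num) |>.1 this)

/-- Choice of a parameter avoiding two bad values. -/
lemma pick_q (z w : ℂ) : ∃ q : ℂ, q ≠ 0 ∧ z ≠ q ∧ w ≠ q⁻¹ := by
  by_cases h1 : z ≠ 1 ∧ w ≠ 1⁻¹
  · exact ⟨1, one_ne_zero, h1.1, h1.2⟩
  by_cases h2 : z ≠ 2 ∧ w ≠ 2⁻¹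
  · exact ⟨2, two_ne_zero, h2.1, h2.2⟩
  rw [not_and_or, not_not, not_not] at h1 h2
  refine ⟨3, by norm_num, fun hz3 => ?_, fun hw3 => ?_⟩
  · rcases h1 with h | h
    · rw [hz3] at h; norm_num at h
    · rcases h2 with h' | h'
      · rw [hz3] at h'; norm_num at h'
      · rw [h] at h'; norm_num at h'
  · rcases h1 with h | h
    · rcases h2 with h' | h'
      · rw [h] at h'; norm_num at h'
      · rw [hw3] at h'; norm_num at h'
    · rw [hw3] at h; norm_num at h

/-- Every vector is a sum of three unit vectors. -/
lemma decomp (v : V) : ∃ q a b : ℂ, q ≠ 0 ∧ a ≠ 0 ∧ b ≠ 0 ∧ v = vc q + vc a + vc b := by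
  obtain ⟨q, hq, hz, hw⟩ := pick_q v.1 v.2
  obtain ⟨c1, hc1⟩ : ∃ c : ℂ, v.1 - q = c := ⟨_, rfl⟩
  obtain ⟨c2, hc2⟩ : ∃ c : ℂ, v.2 - q⁻¹ = c := ⟨_, rfl⟩
  have hc1ne : c1 ≠ 0 := hc1 ▸ sub_ne_zero.2 hz
  have hc2ne : c2 ≠ 0 := hc2 ▸ sub_ne_zero.2 hw
  obtain ⟨e, he⟩ := IsAlgClosed.exists_pow_nat_eq (k := ℂ) (c1^2 - 4*c1/c2) two_pos
  have hsum : (c1 + e)/2 + (c1 - e)/2 = c1 := by ring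
  have he' : c2 * e^2 = c2 * c1^2 - 4*c1 := by
    rw [he, mul_sub]
    congr 1
    field_simp
  have hab : ((c1 + e)/2) * ((c1 - e)/2) = c1/c2 := by
    field_simp
    linear_combination (-1 : ℂ) * he'
  have ha : (c1 + e)/2 ≠ 0 := by
    intro h
    rw [h, zero_mul] at hab
    have : c1 = 0 := by field_simp at hab; linear_combination -hab
    exact hc1ne this
  have hb : (c1 - e)/2 ≠ 0 := by
    intro h
    rw [h, mul_zero] at hab
    have : c1 = 0 := by field_simp at hab; linear_combination -hab
    exact hc1ne this
  refine ⟨q, (c1 + e)/2, (c1 - e)/2, hq, ha, hb, ?_⟩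
  have hinv : ((c1 + e)/2)⁻¹ + ((c1 - e)/2)⁻¹ = c2 := by
    rw [inv_add_inv (ha := ha) (hb := hb), hsum, hab]
    rw [div_div_eq_mul_div, div_eq_iff hc1ne]
    ring
  rw [Prod.ext_iff]
  constructor
  · show v.1 = q + (c1 + e)/2 + (c1 - e)/2
    linear_combination hc1
  · show v.2 = q⁻¹ + ((c1 + e)/2)⁻¹ + ((c1 - e)/2)⁻¹
    rw [add_assoc, hinv]
    linear_combination hc2

section Maps
variable (F : V → V)
variable (hF : ∀ x y : V, qf (x - y) = 1 → qf (F x - F y) = 1)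

include hF

/-- Image of a unit step is a unit step. -/
lemma step (x : V) {s : ℂ} (hs : s ≠ 0) :
    ∃ p : ℂ, p ≠ 0 ∧ F (x + vc s) = F x + vc p := by
  have h1 : qf ((x + vc s) - x) = 1 := by
    have : (x + vc s) - x = vc s := by ring
    rw [this]; exact qf_vc hs
  have h2 := hF (x + vc s) x h1
  obtain ⟨hp, he⟩ := unit_struct h2
  exact ⟨_, hp, by rw [← he]; ring⟩

/-- Injectivity on pairs at nonzero distance. -/
lemma inj {x y : V} (hxy : qf (y - x) ≠ 0) : F x ≠ F y := by
  intro heq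
  set h1 := (y - x).1 with h1def
  set h2 := (y - x).2 with h2def
  have hΔ : h1 * h2 ≠ 0 := hxy
  have hh1 : h1 ≠ 0 := fun h => hΔ (by rw [h, zero_mul])
  have hh2 : h2 ≠ 0 := fun h => hΔ (by rw [h, mul_zero])
  -- the auxiliary point c with qf (c - x) = 3 and qf (c - y) = 1
  obtain ⟨g, hgroot⟩ := exists_quad_root h2 (-(2 + h1*h2)) (3*h1) hh2
  have hg : g ≠ 0 := by
    intro h0
    rw [h0] at hgroot
    simp at hgroot
    exact hh1 (by tauto)
  -- the sixth-root-like parameter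
  obtain ⟨ν, hνroot⟩ := exists_quad_root 1 (-1) (1/3) one_ne_zero
  have hν : ν ≠ 0 := by
    intro h0; rw [h0] at hνroot; norm_num at hνroot
  set ν' : ℂ := 1 - ν with hν'def
  have hν' : ν' ≠ 0 := by
    intro h0
    have : ν = 1 := by rw [hν'def] at h0; linear_combination -h0
    rw [this] at hνroot; norm_num at hνroot
  have hprod : ν * ν' = 1/3 := by rw [hν'def]; linear_combination -hνroot
  set c : V := x + (g, 3/g) with hcdef
  set a : V := x + (g*ν, 3*ν'/g) with hadef
  set b : V := x + (g*ν', 3*ν/g) with hbdef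
  -- upstream unit distances
  have qax : qf (a - x) = 1 := by
    rw [hadef]; show (x + (g*ν, 3*ν'/g) - x).1 * (x + (g*ν, 3*ν'/g) - x).2 = 1
    simp only [Prod.fst_add, Prod.snd_add, Prod.fst_sub, Prod.snd_sub]
    field_simp
    linear_combination 3 * g * hprod
  have qbx : qf (b - x) = 1 := by
    rw [hbdef]; show (x + (g*ν', 3*ν/g) - x).1 * (x + (g*ν', 3*ν/g) - x).2 = 1
    simp only [Prod.fst_add, Prod.snd_add, Prod.fst_sub, Prod.snd_sub]
    field_simp
    linear_combination 3 * g * hprod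
  have qac : qf (a - c) = 1 := by
    show (a - c).1 * (a - c).2 = 1
    rw [hadef, hcdef]
    simp only [Prod.fst_add, Prod.snd_add, Prod.fst_sub, Prod.snd_sub]
    field_simp
    linear_combination (-3*g) * hνroot
  have qbc : qf (b - c) = 1 := by
    show (b - c).1 * (b - c).2 = 1
    rw [hbdef, hcdef]
    simp only [Prod.fst_add, Prod.snd_add, Prod.fst_sub, Prod.snd_sub]
    field_simp
    linear_combination (-3*g) * hνroot
  have qab : qf (a - b) = 1 := by
    show (a - b).1 * (a - b).2 = 1
    rw [hadef, hbdef]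
    simp only [Prod.fst_add, Prod.snd_add, Prod.fst_sub, Prod.snd_sub]
    field_simp
    linear_combination (-12*g) * hνroot
  have qcy : qf (c - y) = 1 := by
    show (c - y).1 * (c - y).2 = 1
    have e1 : (c - y).1 = g - h1 := by
      rw [hcdef, h1def]; simp only [Prod.fst_add, Prod.fst_sub]; ring
    have e2 : (c - y).2 = 3/g - h2 := by
      rw [hcdef, h2def]; simp only [Prod.snd_add, Prod.snd_sub]; ring
    rw [e1, e2]
    field_simp
    linear_combination -hgroot
  -- downstream: K4 on F x, F c, F a, F b
  have dcy := hF c y qcy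
  rw [← heq] at dcy
  exact K4 (F x) (F c) (F a) (F b) dcy (hF a x qax) (hF b x qbx)
    (hF a c qac) (hF b c qbc)
    (by rw [← qf_neg]; have : -(F b - F a) = F a - F b := by ring
        rw [this]; exact hF a b qab)

/-- Rhombus closure: translating the base point by `vc t` (for `t ≠ ±s`) does not change
the image increment of a `vc s` step. -/
lemma psi_shift (x : V) {s t : ℂ} (hs : s ≠ 0) (ht : t ≠ 0) (hts : t ≠ s) (hts' : t ≠ -s) :
    F (x + vc t + vc s) - F (x + vc t) = F (x + vc s) - F x := by
  obtain ⟨p, hp, ep⟩ := step F hF x hs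
  obtain ⟨q, hq, eq1⟩ := step F hF (x + vc s) ht
  obtain ⟨q', hq', eq'⟩ := step F hF x ht
  obtain ⟨p', hp', ep'⟩ := step F hF (x + vc t) hs
  have hst : s + t ≠ 0 := fun h => hts' (by linear_combination h)
  have E1 : F (x + vc s + vc t) = F x + vc p + vc q := by
    rw [eq1, ep]
  have E2 : F (x + vc s + vc t) = F x + vc q' + vc p' := by
    have hcomm : x + vc s + vc t = x + vc t + vc s := by ring
    rw [hcomm, ep', eq']
  have Ekey : vc p + vc q = vc q' + vc p' := by
    have h3 : F x + vc p + vc q = F x + vc q' + vc p' := by rw [← E1, ← E2]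
    have h4 : (vc p + vc q) + F x = (vc q' + vc p') + F x := by
      rw [show (vc p + vc q) + F x = F x + vc p + vc q by ring, h3]; ring
    exact add_right_cancel h4
  have u1 : p + q = q' + p' := by
    have := congrArg Prod.fst Ekey
    simpa [vc] using this
  have u2 : p⁻¹ + q⁻¹ = q'⁻¹ + p'⁻¹ := by
    have := congrArg Prod.snd Ekey
    simpa [vc] using this
  by_cases hpq : p + q = 0
  · -- collapse of the long diagonal: impossible
    exfalso
    have hq2 : q = -p := by linear_combination hpq
    have hcol : F (x + vc s + vc t) = F x := by
      rw [E1, hq2, vc_neg]; ring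
    have hnz : qf ((x + vc s + vc t) - x) ≠ 0 := by
      have hd : (x + vc s + vc t) - x = (s + t, s⁻¹ + t⁻¹) := by
        show _ = (_, _)
        rw [Prod.ext_iff]
        constructor <;> simp [vc] <;> ring
      rw [hd]
      show (s + t) * (s⁻¹ + t⁻¹) ≠ 0
      have h2 : s⁻¹ + t⁻¹ ≠ 0 := by
        intro h
        have : t + s = 0 := by
          field_simp at h
          linear_combination h
        exact hst (by linear_combination this)
      exact mul_ne_zero hst h2
    exact inj F hF hnz hcol.symm
  · have hprodeq : p' * q' = p * q := by
      have u2' : q * p' * q' + p * p' * q' = p * q * q' + p * q * p' := by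
        field_simp at u2
        linear_combination u2
      have : (p + q) * (p' * q' - p * q) = 0 := by linear_combination u2' - p*q*u1
      rcases mul_eq_zero.1 this with h | h
      · exact absurd h hpq
      · linear_combination h
    have key : (p' - p) * (p' - q) = 0 := by
      linear_combination (-p') * u1 - hprodeq
    rcases mul_eq_zero.1 key with h | h
    · -- the good case : p' = p
      have hpp : p' = p := sub_eq_zero.1 h
      rw [ep', hpp, ep]; ring
    · -- crossed case: F (x + vc t) = F (x + vc s), impossible
      exfalso
      have hpq' : p' = q := sub_eq_zero.1 h
      have hq'p : q' = p := by linear_combination -u1 - hpq'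
      have hcol : F (x + vc t) = F (x + vc s) := by
        rw [eq', hq'p, ep]
      have hnz : qf ((x + vc t) - (x + vc s)) ≠ 0 := by
        have hd : (x + vc t) - (x + vc s) = (t - s, t⁻¹ - s⁻¹) := by
          rw [Prod.ext_iff]
          constructor <;> simp [vc] <;> ring
        rw [hd]
        show (t - s) * (t⁻¹ - s⁻¹) ≠ 0
        have h1 : t - s ≠ 0 := sub_ne_zero.2 hts
        have h2 : t⁻¹ - s⁻¹ ≠ 0 := by
          intro hcon
          apply h1
          field_simp at hcon
          linear_combination -hcon
        exact mul_ne_zero h1 h2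
      exact inj F hF hnz hcol.symm

/-- Shift invariance in the direction of the step itself (via a 60°-rotation detour). -/
lemma psi_shift_self (x : V) {s : ℂ} (hs : s ≠ 0) :
    F (x + vc s + vc s) - F (x + vc s) = F (x + vc s) - F x := by
  obtain ⟨ζ, hζroot⟩ := exists_quad_root 1 (-1) 1 one_ne_zero
  have hζroot' : ζ^2 - ζ + 1 = 0 := by linear_combination hζroot
  have hζ0 : ζ ≠ 0 := by intro h; rw [h] at hζroot'; norm_num at hζroot'
  have hζ1 : ζ ≠ 1 := by intro h; rw [h] at hζroot'; norm_num at hζroot'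
  have hζm1 : ζ ≠ -1 := by intro h; rw [h] at hζroot'; norm_num at hζroot'
  set ζ' : ℂ := 1 - ζ with hζ'def
  have hζ'0 : ζ' ≠ 0 := by
    rw [hζ'def]; intro h
    exact hζ1 (by linear_combination -h)
  have hζ'1 : ζ' ≠ 1 := by
    rw [hζ'def]; intro h
    exact hζ0 (by linear_combination -h)
  have hζ'm1 : ζ' ≠ -1 := by
    rw [hζ'def]; intro h
    have : ζ = 2 := by linear_combination -h
    rw [this] at hζroot'; norm_num at hζroot'
  have hprod : ζ * ζ' = 1 := by rw [hζ'def]; linear_combination -hζroot'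
  -- vc s = vc (s*ζ) + vc (s*ζ')
  have hsplit : vc s = vc (s*ζ) + vc (s*ζ') := by
    rw [Prod.ext_iff]
    constructor
    · show s = s*ζ + s*ζ'
      rw [hζ'def]; ring
    · show s⁻¹ = (s*ζ)⁻¹ + (s*ζ')⁻¹
      rw [mul_inv, mul_inv]
      rw [inv_eq_of_mul_eq_one_right hprod,
        inv_eq_of_mul_eq_one_right (show ζ' * ζ = 1 by linear_combination hprod)]
      rw [hζ'def]; ring
  have hne1 : s*ζ ≠ s := by
    intro h; exact hζ1 (by field_simp at h; tauto)
  have hne2 : s*ζ ≠ -s := by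
    intro h; apply hζm1
    have : ζ * s = -1 * s := by linear_combination h
    exact mul_right_cancel₀ hs this
  have hne3 : s*ζ' ≠ s := by
    intro h; apply hζ'1
    have : ζ' * s = 1 * s := by linear_combination h
    exact mul_right_cancel₀ hs this
  have hne4 : s*ζ' ≠ -s := by
    intro h; apply hζ'm1
    have : ζ' * s = -1 * s := by linear_combination h
    exact mul_right_cancel₀ hs this
  have step1 : F (x + vc (s*ζ) + vc s) - F (x + vc (s*ζ)) = F (x + vc s) - F x :=
    psi_shift F hF x hs (mul_ne_zero hs hζ0) hne1 hne2
  have step2 : F ((x + vc (s*ζ)) + vc (s*ζ') + vc s) - F ((x + vc (s*ζ)) + vc (s*ζ'))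
      = F ((x + vc (s*ζ)) + vc s) - F (x + vc (s*ζ)) :=
    psi_shift F hF (x + vc (s*ζ)) hs (mul_ne_zero hs hζ'0) hne3 hne4
  have hpt : (x + vc (s*ζ)) + vc (s*ζ') = x + vc s := by rw [hsplit]; ring
  rw [hpt] at step2
  rw [step2, step1]

/-- Full shift invariance: any unit translation. -/
lemma psi_shift_all (x : V) {s t : ℂ} (hs : s ≠ 0) (ht : t ≠ 0) :
    F (x + vc t + vc s) - F (x + vc t) = F (x + vc s) - F x := by
  by_cases h1 : t = s
  · subst h1; exact psi_shift_self F hF x hs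
  by_cases h2 : t = -s
  · subst h2
    have := psi_shift_self F hF (x + vc (-s)) hs
    have hx : x + vc (-s) + vc s = x := by rw [vc_neg]; ring
    rw [hx] at this
    rw [show x + vc s = x + vc (-s) + vc s + vc s by rw [vc_neg]; ring]
    rw [hx]
    linear_combination (norm := module) -this
  · exact psi_shift F hF x hs ht h1 h2


/-- Unit steps translate uniformly. -/
lemma step_base (hF0 : F 0 = 0) (x : V) {s : ℂ} (hs : s ≠ 0) :
    F (x + vc s) = F x + F (vc s) := by
  obtain ⟨q, a, b, hq, ha, hb, hx⟩ := decomp x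
  have h3 := psi_shift_all F hF (vc q + vc a) hs hb
  have h2 := psi_shift_all F hF (vc q) hs ha
  have h1 := psi_shift_all F hF 0 hs hq
  simp only [zero_add, hF0, sub_zero] at h1
  rw [hx]
  linear_combination (norm := module) h3 + h2 + h1

/-- `F` is additive. -/
lemma F_add (hF0 : F 0 = 0) (v w : V) : F (v + w) = F v + F w := by
  obtain ⟨q, a, b, hq, ha, hb, hw⟩ := decomp w
  have e1 : F (v + vc q + vc a + vc b) = F (v + vc q + vc a) + F (vc b) :=
    step_base F hF hF0 _ hb
  have e2 : F (v + vc q + vc a) = F (v + vc q) + F (vc a) := step_base F hF hF0 _ ha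
  have e3 : F (v + vc q) = F v + F (vc q) := step_base F hF hF0 _ hq
  have f1 : F (vc q + vc a + vc b) = F (vc q + vc a) + F (vc b) := step_base F hF hF0 _ hb
  have f2 : F (vc q + vc a) = F (vc q) + F (vc a) := step_base F hF hF0 _ ha
  have hvw : v + w = v + vc q + vc a + vc b := by rw [hw]; ring
  rw [hvw, hw, e1, e2, e3, f1, f2]
  ring

end Maps

section Endgame

variable (F : V → V)
variable (Fadd : ∀ v w : V, F (v + w) = F v + F w)
variable (Funit : ∀ v : V, qf v = 1 → qf (F v) = 1)

include Fadd

lemma F_zero : F 0 = 0 := by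
  have := Fadd 0 0
  simpa using this.symm

lemma F_neg (v : V) : F (-v) = - F v := by
  have h := Fadd v (-v)
  rw [add_neg_cancel, F_zero F Fadd] at h
  linear_combination (norm := module) -h

include Funit

lemma F_vc {s : ℂ} (hs : s ≠ 0) :
    (F (vc s)).1 ≠ 0 ∧ F (vc s) = vc ((F (vc s)).1) :=
  unit_struct (Funit _ (qf_vc hs))

/-- The doubling dichotomy. -/
lemma ratio {s : ℂ} (hs : s ≠ 0) :
    (F (vc (2*s))).1 = 2 * (F (vc s)).1 ∨
    2 * (F (vc (2*s))).1 = (F (vc s)).1 := by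
  have h2s : (2:ℂ)*s ≠ 0 := mul_ne_zero two_ne_zero hs
  have h3s : (3:ℂ)*s ≠ 0 := mul_ne_zero three_ne_zero hs
  obtain ⟨ha, hea⟩ := F_vc F Fadd Funit hs
  obtain ⟨hb, heb⟩ := F_vc F Fadd Funit h2s
  obtain ⟨hc, hec⟩ := F_vc F Fadd Funit h3s
  set a : ℂ := (F (vc s)).1
  set b : ℂ := (F (vc (2*s))).1
  set c : ℂ := (F (vc (3*s))).1
  -- the rational affine relation between the three unit vectors
  have hup : (9:ℤ) • vc (3*s) + (5:ℤ) • vc s = (16:ℤ) • vc (2*s) := by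
    rw [Prod.ext_iff]
    constructor
    · show (9:ℤ) • (3*s) + (5:ℤ) • s = (16:ℤ) • (2*s)
      push_cast [zsmul_eq_mul]; ring
    · show (9:ℤ) • (3*s)⁻¹ + (5:ℤ) • s⁻¹ = (16:ℤ) • (2*s)⁻¹
      push_cast [zsmul_eq_mul]
      field_simp
      ring
  -- map it through F
  have Fhom : ∀ (n : ℤ) (v : V), F (n • v) = n • F v := by
    intro n v
    exact map_zsmul (AddMonoidHom.mk' F (fun x y => Fadd x y)) n v
  have hdown : (9:ℤ) • F (vc (3*s)) + (5:ℤ) • F (vc s) = (16:ℤ) • F (vc (2*s)) := by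
    rw [← Fhom, ← Fhom, ← Fhom, ← Fadd, hup]
  rw [hea, heb, hec] at hdown
  have d1 : 9*c + 5*a = 16*b := by
    have := congrArg Prod.fst hdown
    simpa [vc, zsmul_eq_mul] using this
  have d2 : 9*c⁻¹ + 5*a⁻¹ = 16*b⁻¹ := by
    have := congrArg Prod.snd hdown
    simpa [vc, zsmul_eq_mul] using this
  have d2' : 9*a*b + 5*c*b = 16*a*c := by
    field_simp at d2
    linear_combination d2
  have key : (2*b - a) * (b - 2*a) = 0 := by
    linear_combination (9/40 : ℂ) * d2' - ((5*b - 16*a)/40) * d1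
  rcases mul_eq_zero.1 key with h | h
  · right; linear_combination h
  · left; linear_combination h

lemma A_neg (x : ℂ) : (F (vc (-x))).1 = -(F (vc x)).1 := by
  rw [vc_neg, F_neg F Fadd]
  simp

lemma k23 {s : ℂ} (hs : s ≠ 0) :
    F ((0:ℂ), 3/(2*s)) = F (vc s) + F (vc s) - F (vc (2*s)) := by
  have hid : vc s + vc s = vc (2*s) + ((0:ℂ), 3/(2*s)) := by
    rw [Prod.ext_iff]
    constructor
    · show s + s = 2*s + 0
      ring
    · show s⁻¹ + s⁻¹ = (2*s)⁻¹ + 3/(2*s)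
      field_simp
      ring
  have := Fadd (vc s) (vc s)
  rw [hid, Fadd] at this
  linear_combination (norm := module) this

lemma shape_left {s : ℂ} (hs : s ≠ 0) (h : (F (vc (2*s))).1 = 2*(F (vc s)).1) :
    F ((0:ℂ), 3/(2*s)) = ((0:ℂ), 3/(2*(F (vc s)).1)) := by
  have h2s : (2:ℂ)*s ≠ 0 := mul_ne_zero two_ne_zero hs
  obtain ⟨ha, hea⟩ := F_vc F Fadd Funit hs
  obtain ⟨hb, heb⟩ := F_vc F Fadd Funit h2s
  rw [k23 F Fadd Funit hs, hea, heb, h]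
  rw [Prod.ext_iff]
  constructor
  · show (F (vc s)).1 + (F (vc s)).1 - 2*(F (vc s)).1 = 0
    ring
  · show ((F (vc s)).1)⁻¹ + ((F (vc s)).1)⁻¹ - (2*(F (vc s)).1)⁻¹ = 3/(2*(F (vc s)).1)
    field_simp
    ring

lemma shape_right {s : ℂ} (hs : s ≠ 0) (h : 2*(F (vc (2*s))).1 = (F (vc s)).1) :
    F ((0:ℂ), 3/(2*s)) = ((3*(F (vc s)).1/2 : ℂ), 0) := by
  have h2s : (2:ℂ)*s ≠ 0 := mul_ne_zero two_ne_zero hs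
  obtain ⟨ha, hea⟩ := F_vc F Fadd Funit hs
  obtain ⟨hb, heb⟩ := F_vc F Fadd Funit h2s
  have hb' : (F (vc (2*s))).1 = (F (vc s)).1/2 := by linear_combination h/2
  rw [k23 F Fadd Funit hs, hea, heb, hb']
  rw [Prod.ext_iff]
  constructor
  · show (F (vc s)).1 + (F (vc s)).1 - (F (vc s)).1/2 = 3*(F (vc s)).1/2
    ring
  · show ((F (vc s)).1)⁻¹ + ((F (vc s)).1)⁻¹ - ((F (vc s)).1/2)⁻¹ = 0
    field_simp
    norm_num

lemma dichotomy :
    (∀ s : ℂ, s ≠ 0 → (F (vc (2*s))).1 = 2*(F (vc s)).1) ∨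
    (∀ s : ℂ, s ≠ 0 → 2*(F (vc (2*s))).1 = (F (vc s)).1) := by
  by_cases hall : ∀ s : ℂ, s ≠ 0 → (F (vc (2*s))).1 = 2*(F (vc s)).1
  · exact Or.inl hall
  right
  push_neg at hall
  obtain ⟨s₀, hs₀, hA0⟩ := hall
  have hB0 : 2*(F (vc (2*s₀))).1 = (F (vc s₀)).1 := by
    rcases ratio F Fadd Funit hs₀ with h | h
    · exact absurd h hA0
    · exact h
  intro s hs
  rcases ratio F Fadd Funit hs with h | h
  swap
  · exact h
  exfalso
  by_cases hss : s = -s₀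
  · apply hA0
    subst hss
    have e1 := A_neg F Fadd Funit (2*s₀)
    have e2 := A_neg F Fadd Funit s₀
    rw [show (2:ℂ)*(-s₀) = -(2*s₀) by ring, e1, e2] at h
    linear_combination -h
  · -- the two shapes are incompatible under addition
    have hAs : (F (vc s)).1 ≠ 0 := (F_vc F Fadd Funit hs).1
    have hAs₀ : (F (vc s₀)).1 ≠ 0 := (F_vc F Fadd Funit hs₀).1
    have hsum_ne : 3/(2*s) + 3/(2*s₀) ≠ 0 := by
      intro hcon
      apply hss
      field_simp at hcon
      linear_combination hcon/3
    set w₂ : ℂ := 3/(2*s) + 3/(2*s₀) with hw₂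
    have hu : (3:ℂ)/(2*(3/(2*w₂))) = w₂ := by
      field_simp
    have hu0 : (3:ℂ)/(2*w₂) ≠ 0 := by
      apply div_ne_zero three_ne_zero
      exact mul_ne_zero two_ne_zero hsum_ne
    have hk2 : F ((0:ℂ), w₂) = F ((0:ℂ), 3/(2*s)) + F ((0:ℂ), 3/(2*s₀)) := by
      rw [← Fadd]
      congr 1
      rw [Prod.ext_iff]
      exact ⟨by simp, by simp [hw₂]⟩
    rw [shape_left F Fadd Funit hs h, shape_right F Fadd Funit hs₀ hB0] at hk2
    have hfst : (F ((0:ℂ), w₂)).1 = 3*(F (vc s₀)).1/2 := by rw [hk2]; simp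
    have hsnd : (F ((0:ℂ), w₂)).2 = 3/(2*(F (vc s)).1) := by rw [hk2]; simp
    rcases ratio F Fadd Funit hu0 with h' | h'
    · have := shape_left F Fadd Funit hu0 h'
      rw [hu] at this
      rw [this] at hfst
      simp at hfst
      exact hAs₀ (by linear_combination (-2/3 : ℂ) * hfst)
    · have := shape_right F Fadd Funit hu0 h'
      rw [hu] at this
      rw [this] at hsnd
      simp at hsnd
      have hne : (3:ℂ)/(2*(F (vc s)).1) ≠ 0 :=
        div_ne_zero three_ne_zero (mul_ne_zero two_ne_zero hAs)
      exact hne hsnd.symm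

lemma jk_split (z w : ℂ) : F (z, w) = F (z, (0:ℂ)) + F ((0:ℂ), w) := by
  rw [← Fadd]
  congr 1
  simp [Prod.ext_iff]

omit Funit in
lemma j_add (z₁ z₂ : ℂ) : F (z₁ + z₂, (0:ℂ)) = F (z₁, (0:ℂ)) + F (z₂, (0:ℂ)) := by
  rw [← Fadd]
  congr 1
  simp [Prod.ext_iff]

omit Funit in
lemma k_add (w₁ w₂ : ℂ) : F ((0:ℂ), w₁ + w₂) = F ((0:ℂ), w₁) + F ((0:ℂ), w₂) := by
  rw [← Fadd]
  congr 1
  simp [Prod.ext_iff]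

lemma caseA (F11 : F ((1:ℂ), (1:ℂ)) = (1, 1))
    (hP : ∀ s : ℂ, s ≠ 0 → (F (vc (2*s))).1 = 2*(F (vc s)).1) :
    ∃ σ : ℂ →+* ℂ, ∀ z w : ℂ, F (z, w) = (σ z, σ w) := by
  have F0 : F ((0:ℂ), (0:ℂ)) = 0 := F_zero F Fadd
  have k3 : ∀ s : ℂ, s ≠ 0 → F ((0:ℂ), 3/(2*s)) = ((0:ℂ), 3/(2*(F (vc s)).1)) :=
    fun s hs => shape_left F Fadd Funit hs (hP s hs)
  have harg : ∀ w : ℂ, w ≠ 0 → (3:ℂ)/(2*w) ≠ 0 :=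
    fun w hw => div_ne_zero three_ne_zero (mul_ne_zero two_ne_zero hw)
  have harg2 : ∀ w : ℂ, w ≠ 0 → (3:ℂ)/(2*(3/(2*w))) = w := by
    intro w hw; field_simp
  have kfst : ∀ w : ℂ, (F ((0:ℂ), w)).1 = 0 := by
    intro w
    by_cases hw : w = 0
    · rw [hw, F0]; rfl
    · have := k3 (3/(2*w)) (harg w hw)
      rw [harg2 w hw] at this
      rw [this]
  -- the A function and its additivity through the first coordinate of j
  have σA : ∀ s : ℂ, s ≠ 0 → (F (s, (0:ℂ))).1 = (F (vc s)).1 := by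
    intro s hs
    have h1 : F (vc s) = F (s, (0:ℂ)) + F ((0:ℂ), s⁻¹) := jk_split F Fadd Funit s s⁻¹
    have := congrArg Prod.fst h1
    simp only [Prod.fst_add, kfst] at this
    rw [this]; ring
  have σneg : ∀ z : ℂ, (F (-z, (0:ℂ))).1 = -(F (z, (0:ℂ))).1 := by
    intro z
    have : ((-z : ℂ), (0:ℂ)) = -((z : ℂ), (0:ℂ)) := by simp [Prod.ext_iff]
    rw [this, F_neg F Fadd]
    rfl
  have A3half : ∀ w : ℂ, w ≠ 0 → (F (vc (3/(2*w)))).1 = 3/2 * (F (vc (w⁻¹))).1 := by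
    intro w hw
    have hwi : w⁻¹ ≠ 0 := inv_ne_zero hw
    have h2w : (2*w : ℂ) ≠ 0 := mul_ne_zero two_ne_zero hw
    have hy : ((2*w)⁻¹ : ℂ) + (2*w)⁻¹ = w⁻¹ := by
      rw [eq_comm, inv_eq_iff_eq_inv, eq_comm, inv_add_inv h2w h2w]
      field_simp
      ring
    have hy3 : ((2*w)⁻¹ : ℂ) + ((2*w)⁻¹ + (2*w)⁻¹) = 3/(2*w) := by
      rw [eq_div_iff h2w]
      field_simp
      ring
    have e1 : (F ((3:ℂ)/(2*w), (0:ℂ))).1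
        = (F ((2*w)⁻¹, (0:ℂ))).1 + ((F ((2*w)⁻¹, (0:ℂ))).1 + (F ((2*w)⁻¹, (0:ℂ))).1) := by
      rw [← hy3, j_add F Fadd, j_add F Fadd]
      rfl
    have e2 : (F (w⁻¹, (0:ℂ))).1 = (F ((2*w)⁻¹, (0:ℂ))).1 + (F ((2*w)⁻¹, (0:ℂ))).1 := by
      rw [← hy, j_add F Fadd]
      rfl
    rw [← σA _ (harg w hw), ← σA _ hwi, e1, e2]
    ring
  have κA : ∀ w : ℂ, w ≠ 0 → (F ((0:ℂ), w)).2 = ((F (vc (w⁻¹))).1)⁻¹ := by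
    intro w hw
    have hAnz : (F (vc (w⁻¹))).1 ≠ 0 := (F_vc F Fadd Funit (inv_ne_zero hw)).1
    have := k3 (3/(2*w)) (harg w hw)
    rw [harg2 w hw] at this
    rw [this]
    show (3:ℂ)/(2*(F (vc (3/(2*w)))).1) = _
    rw [A3half w hw]
    rw [show (2:ℂ)*(3/2*(F (vc (w⁻¹))).1) = 3*(F (vc (w⁻¹))).1 from by ring]
    rw [div_eq_iff (mul_ne_zero three_ne_zero hAnz)]
    have hAnz' : (F (vc (1/w))).1 ≠ 0 := by rw [one_div]; exact hAnz
    field_simp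
  have A1 : (F (vc 1)).1 = 1 := by
    have hv : vc (1:ℂ) = ((1:ℂ), (1:ℂ)) := by simp [vc]
    rw [hv, F11]
  have Anz : ∀ s : ℂ, s ≠ 0 → (F (vc s)).1 ≠ 0 := fun s hs => (F_vc F Fadd Funit hs).1
  have κnz : ∀ w : ℂ, w ≠ 0 → (F ((0:ℂ), w)).2 ≠ 0 := by
    intro w hw
    rw [κA w hw]
    exact inv_ne_zero (Anz _ (inv_ne_zero hw))
  have κ0 : (F ((0:ℂ), (0:ℂ))).2 = 0 := by rw [F0]; rfl
  have κ1 : (F ((0:ℂ), (1:ℂ))).2 = 1 := by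
    rw [κA 1 one_ne_zero, inv_one, A1, inv_one]
  have κadd : ∀ w₁ w₂ : ℂ, (F ((0:ℂ), w₁ + w₂)).2 = (F ((0:ℂ), w₁)).2 + (F ((0:ℂ), w₂)).2 := by
    intro w₁ w₂
    rw [k_add F Fadd]
    rfl
  have κneg : ∀ w : ℂ, (F ((0:ℂ), -w)).2 = -(F ((0:ℂ), w)).2 := by
    intro w
    have : ((0:ℂ), -w) = -((0:ℂ), w) := by simp [Prod.ext_iff]
    rw [this, F_neg F Fadd]
    rfl
  have Ainv : ∀ s : ℂ, s ≠ 0 → (F (vc (s⁻¹))).1 = ((F ((0:ℂ), s)).2)⁻¹ := by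
    intro s hs
    rw [κA s hs, inv_inv]
  have κinv : ∀ s : ℂ, s ≠ 0 → (F ((0:ℂ), s⁻¹)).2 = ((F (vc s)).1)⁻¹ := by
    intro s hs
    rw [κA s⁻¹ (inv_ne_zero hs), inv_inv]
  -- the square law
  have κsq : ∀ s : ℂ, (F ((0:ℂ), s^2)).2 = ((F ((0:ℂ), s)).2)^2 := by
    intro s
    by_cases hs : s = 0
    · rw [hs]
      rw [show ((0:ℂ)^2 : ℂ) = 0 from by norm_num, κ0]
      norm_num
    by_cases hs1 : s = -1
    · rw [hs1]
      have : ((-1:ℂ))^2 = 1 := by norm_num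
      rw [this, κ1]
      have : ((-1:ℂ)) = -(1:ℂ) := by norm_num
      rw [this, κneg 1, κ1]
      norm_num
    have hs1' : s + 1 ≠ 0 := fun h => hs1 (by linear_combination h)
    have hss1 : s*(s+1) ≠ 0 := mul_ne_zero hs hs1'
    have u := (F ((0:ℂ), s)).2
    have κs1 : (F ((0:ℂ), s + 1)).2 = (F ((0:ℂ), s)).2 + 1 := by
      rw [κadd, κ1]
    have argid' : ((s*(s+1))⁻¹ : ℂ) = s⁻¹ - (s+1)⁻¹ := by
      field_simp
      ring
    -- A on the difference of inverses
    have key1 : (F (vc ((s*(s+1))⁻¹))).1 = (F (vc (s⁻¹))).1 - (F (vc ((s+1)⁻¹))).1 := by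
      rw [← σA _ (inv_ne_zero hss1), ← σA _ (inv_ne_zero hs), ← σA _ (inv_ne_zero hs1')]
      rw [argid']
      have : ((s⁻¹ - (s+1)⁻¹ : ℂ), (0:ℂ)) = (s⁻¹, (0:ℂ)) + (-((s+1)⁻¹), (0:ℂ)) := by
        simp [Prod.ext_iff]
        ring
      rw [this]
      have := Fadd (s⁻¹, (0:ℂ)) (-((s+1)⁻¹), (0:ℂ))
      rw [this]
      show (F (s⁻¹, (0:ℂ))).1 + (F (-((s+1)⁻¹), (0:ℂ))).1 = _
      rw [σneg]
      ring
    -- translate into κ values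
    have hu : (F ((0:ℂ), s)).2 ≠ 0 := κnz s hs
    have hu1 : (F ((0:ℂ), s+1)).2 ≠ 0 := κnz _ hs1'
    have e1 : (F ((0:ℂ), s*(s+1))).2 = ((F (vc ((s*(s+1))⁻¹))).1)⁻¹ := κA _ hss1
    have e2 : (F (vc (s⁻¹))).1 = ((F ((0:ℂ), s)).2)⁻¹ := Ainv s hs
    have e3 : (F (vc ((s+1)⁻¹))).1 = ((F ((0:ℂ), s+1)).2)⁻¹ := Ainv _ hs1'
    rw [key1, e2, e3, κs1] at e1
    have hwdiff : (((F ((0:ℂ), s)).2)⁻¹ - ((F ((0:ℂ), s)).2 + 1)⁻¹ : ℂ)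
        = (((F ((0:ℂ), s)).2) * ((F ((0:ℂ), s)).2 + 1))⁻¹ := by
      rw [κs1] at hu1
      field_simp
      ring
    rw [hwdiff, inv_inv] at e1
    -- κ(s² + s) = κ(s)² + κ(s)
    have e4 : (F ((0:ℂ), s^2 + s)).2 = (F ((0:ℂ), s^2)).2 + (F ((0:ℂ), s)).2 := κadd _ _
    have e5 : s*(s+1) = s^2 + s := by ring
    rw [e5] at e1
    rw [e1] at e4
    linear_combination -e4
  -- multiplicativity
  have κmul : ∀ s t : ℂ, (F ((0:ℂ), s*t)).2 = (F ((0:ℂ), s)).2 * (F ((0:ℂ), t)).2 := by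
    intro s t
    have e := κsq (s + t)
    have el : (F ((0:ℂ), (s+t)^2)).2
        = (F ((0:ℂ), s^2)).2 + ((F ((0:ℂ), s*t)).2 + ((F ((0:ℂ), s*t)).2 + (F ((0:ℂ), t^2)).2)) := by
      have harg : ((s+t)^2 : ℂ) = s^2 + (s*t + (s*t + t^2)) := by ring
      rw [harg, κadd, κadd, κadd]
    have er : (F ((0:ℂ), s+t)).2 = (F ((0:ℂ), s)).2 + (F ((0:ℂ), t)).2 := κadd _ _
    rw [el, er] at e
    rw [κsq s, κsq t] at e
    have h2 : (2:ℂ) ≠ 0 := two_ne_zero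
    have := mul_left_cancel₀ h2 (show (2:ℂ) * (F ((0:ℂ), s*t)).2
        = 2 * ((F ((0:ℂ), s)).2 * (F ((0:ℂ), t)).2) by linear_combination e)
    exact this
  -- assemble the ring hom
  refine ⟨⟨⟨⟨fun w => (F ((0:ℂ), w)).2, κ1⟩, κmul⟩, κ0, κadd⟩, ?_⟩
  intro z w
  -- identify A with κ
  have Aκ : ∀ s : ℂ, s ≠ 0 → (F (vc s)).1 = (F ((0:ℂ), s)).2 := by
    intro s hs
    have h1 : (F ((0:ℂ), s)).2 * (F ((0:ℂ), s⁻¹)).2 = 1 := by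
      rw [← κmul, mul_inv_cancel₀ hs, κ1]
    rw [κinv s hs] at h1
    have hA := Anz s hs
    field_simp at h1
    linear_combination -h1
  have kv : F ((0:ℂ), w) = ((0:ℂ), (F ((0:ℂ), w)).2) := by
    rw [Prod.ext_iff]
    exact ⟨kfst w, rfl⟩
  have jv : F (z, (0:ℂ)) = ((F ((0:ℂ), z)).2, (0:ℂ)) := by
    by_cases hz : z = 0
    · rw [hz, F0, Prod.ext_iff]
      exact ⟨rfl, rfl⟩
    · have h1 : F (vc z) = F (z, (0:ℂ)) + F ((0:ℂ), z⁻¹) := jk_split F Fadd Funit z z⁻¹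
      have h2 : F (vc z) = vc ((F (vc z)).1) := (F_vc F Fadd Funit hz).2
      rw [Prod.ext_iff]
      constructor
      · rw [σA z hz, Aκ z hz]
      · have := congrArg Prod.snd h1
        rw [h2] at this
        show (F (z, (0:ℂ))).2 = 0
        simp only [Prod.snd_add] at this
        have hsnd : (F (z, (0:ℂ))).2 = ((F (vc z)).1)⁻¹ - (F ((0:ℂ), z⁻¹)).2 := by
          rw [show (vc ((F (vc z)).1)).2 = ((F (vc z)).1)⁻¹ from rfl] at this
          linear_combination -this
        rw [hsnd, κinv z hz]
        ring
  rw [jk_split F Fadd Funit z w, jv, kv]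
  rw [Prod.ext_iff]
  constructor
  · show (F ((0:ℂ), z)).2 + 0 = (F ((0:ℂ), z)).2
    ring
  · show (0:ℂ) + (F ((0:ℂ), w)).2 = (F ((0:ℂ), w)).2
    ring

lemma structure_theorem (F11 : F ((1:ℂ), (1:ℂ)) = (1, 1)) :
    (∃ σ : ℂ →+* ℂ, ∀ z w : ℂ, F (z, w) = (σ z, σ w)) ∨
    (∃ σ : ℂ →+* ℂ, ∀ z w : ℂ, F (z, w) = (σ w, σ z)) := by
  rcases dichotomy F Fadd Funit with hP | hQ
  · exact Or.inl (caseA F Fadd Funit F11 hP)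
  · right
    set G : V → V := fun v => ((F v).2, (F v).1) with hG
    have Gadd : ∀ v w : V, G (v + w) = G v + G w := by
      intro v w
      simp only [hG, Fadd v w]
      rfl
    have Gunit : ∀ v : V, qf v = 1 → qf (G v) = 1 := by
      intro v hv
      have := Funit v hv
      simpa [hG, qf, mul_comm] using this
    have G11 : G ((1:ℂ), (1:ℂ)) = (1, 1) := by
      simp only [hG, F11]
    have hP' : ∀ s : ℂ, s ≠ 0 → (G (vc (2*s))).1 = 2*(G (vc s)).1 := by
      intro s hs
      have h2s : (2:ℂ)*s ≠ 0 := mul_ne_zero two_ne_zero hs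
      obtain ⟨ha, hea⟩ := F_vc F Fadd Funit hs
      obtain ⟨hb, heb⟩ := F_vc F Fadd Funit h2s
      have e1 : (G (vc (2*s))).1 = ((F (vc (2*s))).1)⁻¹ := by
        simp only [hG]
        rw [heb]
        rfl
      have e2 : (G (vc s)).1 = ((F (vc s)).1)⁻¹ := by
        simp only [hG]
        rw [hea]
        rfl
      rw [e1, e2]
      have hb' : (F (vc (2*s))).1 = (F (vc s)).1/2 := by linear_combination (hQ s hs)/2
      rw [hb']
      field_simp
    obtain ⟨σ, hσ⟩ := caseA G Gadd Gunit G11 hP'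
    refine ⟨σ, fun z w => ?_⟩
    have h1 := hσ z w
    have h2 : ((F (z, w)).2, (F (z, w)).1) = (σ z, σ w) := h1
    rw [Prod.ext_iff] at h2 ⊢
    exact ⟨h2.2, h2.1⟩

end Endgame

end
end BQaux

/-- The Beckman-Quarles theorem for `ℂ² → ℂ²`, Theorem 1:
any unit-distance preserving map fixing `(0,0)`, `(1,0)`, `(0,1)` is given coordinatewise
by `ρ(Re x) ± ρ(Im x)·i` for some field homomorphism `ρ : ℝ → ℂ`. -/
theorem stmt_0 (f : ℂ × ℂ → ℂ × ℂ)
    (hf : ∀ X Y : ℂ × ℂ, (X.1 - Y.1) ^ 2 + (X.2 - Y.2) ^ 2 = 1 →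
      ((f X).1 - (f Y).1) ^ 2 + ((f X).2 - (f Y).2) ^ 2 = 1)
    (h00 : f (0, 0) = (0, 0)) (h10 : f (1, 0) = (1, 0)) (h01 : f (0, 1) = (0, 1)) :
    ∃ ρ : ℝ →+* ℂ, ∀ x₁ x₂ : ℂ,
      f (x₁, x₂) = (ρ x₁.re + ρ x₁.im * Complex.I, ρ x₂.re + ρ x₂.im * Complex.I) ∨
      f (x₁, x₂) = (ρ x₁.re - ρ x₁.im * Complex.I, ρ x₂.re - ρ x₂.im * Complex.I) := by
  classical
  open Complex in
  set T : ℂ × ℂ → ℂ × ℂ := fun x => (x.1 + Complex.I*x.2, x.1 - Complex.I*x.2) with hT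
  set Ti : ℂ × ℂ → ℂ × ℂ :=
    fun u => ((u.1 + u.2)/2, (u.1 - u.2)/(2*Complex.I)) with hTi
  have hI2 : Complex.I * Complex.I = -1 := Complex.I_mul_I
  have hInz : Complex.I ≠ 0 := Complex.I_ne_zero
  have hTiT : ∀ x, Ti (T x) = x := by
    intro x
    simp only [hT, hTi, Prod.ext_iff]
    constructor
    · show (x.1 + Complex.I*x.2 + (x.1 - Complex.I*x.2))/2 = x.1
      ring
    · show (x.1 + Complex.I*x.2 - (x.1 - Complex.I*x.2))/(2*Complex.I) = x.2
      field_simp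
      ring
  have hTTi : ∀ u, T (Ti u) = u := by
    intro u
    simp only [hT, hTi, Prod.ext_iff]
    constructor
    · show (u.1 + u.2)/2 + Complex.I*((u.1 - u.2)/(2*Complex.I)) = u.1
      field_simp
      ring
    · show (u.1 + u.2)/2 - Complex.I*((u.1 - u.2)/(2*Complex.I)) = u.2
      field_simp
      ring
  have hqfT : ∀ a b : ℂ × ℂ, BQaux.qf (T a - T b) = (a.1 - b.1)^2 + (a.2 - b.2)^2 := by
    intro a b
    show (T a - T b).1 * (T a - T b).2 = _
    simp only [hT, Prod.fst_sub, Prod.snd_sub]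
    show (a.1 + Complex.I*a.2 - (b.1 + Complex.I*b.2)) *
      (a.1 - Complex.I*a.2 - (b.1 - Complex.I*b.2)) = _
    linear_combination (-(a.2)^2 + 2*a.2*b.2 - b.2^2) * hI2
  set F : BQaux.V → BQaux.V := fun v => T (f (Ti v)) with hFdef
  have hFpres : ∀ x y : BQaux.V, BQaux.qf (x - y) = 1 → BQaux.qf (F x - F y) = 1 := by
    intro x y h
    have h1 : (((Ti x).1 - (Ti y).1)^2 + ((Ti x).2 - (Ti y).2)^2 : ℂ) = 1 := by
      rw [← hqfT (Ti x) (Ti y), hTTi, hTTi]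
      exact h
    have h2 := hf (Ti x) (Ti y) h1
    show BQaux.qf (T (f (Ti x)) - T (f (Ti y))) = 1
    rw [hqfT]
    exact h2
  have hF0 : F (0 : BQaux.V) = 0 := by
    show T (f (Ti (0, 0))) = (0, 0)
    have : Ti ((0 : ℂ), (0 : ℂ)) = (0, 0) := by
      simp [hTi, Prod.ext_iff]
    rw [this, h00]
    simp [hT, Prod.ext_iff]
  have hF11 : F ((1:ℂ), (1:ℂ)) = (1, 1) := by
    show T (f (Ti (1, 1))) = (1, 1)
    have : Ti ((1 : ℂ), (1 : ℂ)) = (1, 0) := by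
      simp [hTi, Prod.ext_iff]
    rw [this, h10]
    simp [hT, Prod.ext_iff]
  have hFii : F (Complex.I, -Complex.I) = (Complex.I, -Complex.I) := by
    show T (f (Ti (Complex.I, -Complex.I))) = (Complex.I, -Complex.I)
    have : Ti (Complex.I, -Complex.I) = (0, 1) := by
      simp only [hTi, Prod.ext_iff]
      constructor
      · show (Complex.I + -Complex.I)/2 = 0
        ring
      · show (Complex.I - -Complex.I)/(2*Complex.I) = 1
        field_simp
        ring
    rw [this, h01]
    simp only [hT, Prod.ext_iff]
    constructor
    · show (0 : ℂ) + Complex.I * 1 = Complex.I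
      ring
    · show (0 : ℂ) - Complex.I * 1 = -Complex.I
      ring
  have hFadd : ∀ v w : BQaux.V, F (v + w) = F v + F w :=
    BQaux.F_add F hFpres hF0
  have hFunit : ∀ v : BQaux.V, BQaux.qf v = 1 → BQaux.qf (F v) = 1 := by
    intro v hv
    have := hFpres v 0 (by rwa [sub_zero])
    rwa [hF0, sub_zero] at this
  have hfF : ∀ x : ℂ × ℂ, f x = Ti (F (T x)) := by
    intro x
    show f x = Ti (T (f (Ti (T x))))
    rw [hTiT, hTiT]
  rcases BQaux.structure_theorem F hFadd hFunit hF11 with ⟨σ, hσ⟩ | ⟨σ, hσ⟩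
  · -- the "+" branch
    have hσI : σ Complex.I = Complex.I := by
      have := hσ Complex.I (-Complex.I)
      rw [hFii] at this
      exact (Prod.ext_iff.1 this.symm).1
    refine ⟨σ.comp Complex.ofRealHom, fun x₁ x₂ => Or.inl ?_⟩
    have hform : ∀ z : ℂ, σ z = σ.comp Complex.ofRealHom z.re
        + σ.comp Complex.ofRealHom z.im * Complex.I := by
      intro z
      have hz : z = (z.re : ℂ) + (z.im : ℂ) * Complex.I := (Complex.re_add_im z).symm
      calc σ z = σ ((z.re : ℂ) + (z.im : ℂ) * Complex.I) := by rw [← hz]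
        _ = σ (z.re : ℂ) + σ (z.im : ℂ) * σ Complex.I := by
              rw [map_add, map_mul]
        _ = _ := by rw [hσI]; rfl
    rw [hfF (x₁, x₂)]
    have hTx : T (x₁, x₂) = (x₁ + Complex.I*x₂, x₁ - Complex.I*x₂) := rfl
    rw [hTx, hσ]
    rw [Prod.ext_iff]
    constructor
    · show (σ (x₁ + Complex.I*x₂) + σ (x₁ - Complex.I*x₂))/2 = _
      rw [map_add, map_sub, map_mul, hσI, ← hform x₁]
      ring
    · show (σ (x₁ + Complex.I*x₂) - σ (x₁ - Complex.I*x₂))/(2*Complex.I) = _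
      rw [map_add, map_sub, map_mul, hσI, ← hform x₂]
      field_simp
      ring
  · -- the "−" branch
    have hσI : σ Complex.I = -Complex.I := by
      have := hσ Complex.I (-Complex.I)
      rw [hFii] at this
      have h1 : Complex.I = σ (-Complex.I) := (Prod.ext_iff.1 this).1
      rw [map_neg] at h1
      linear_combination h1
    refine ⟨σ.comp Complex.ofRealHom, fun x₁ x₂ => Or.inr ?_⟩
    have hform : ∀ z : ℂ, σ z = σ.comp Complex.ofRealHom z.re
        - σ.comp Complex.ofRealHom z.im * Complex.I := by
      intro z
      have hz : z = (z.re : ℂ) + (z.im : ℂ) * Complex.I := (Complex.re_add_im z).symm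
      calc σ z = σ ((z.re : ℂ) + (z.im : ℂ) * Complex.I) := by rw [← hz]
        _ = σ (z.re : ℂ) + σ (z.im : ℂ) * σ Complex.I := by
              rw [map_add, map_mul]
        _ = _ := by
              rw [hσI]
              simp only [RingHom.comp_apply, Complex.ofRealHom_eq_coe]
              ring
    rw [hfF (x₁, x₂)]
    have hTx : T (x₁, x₂) = (x₁ + Complex.I*x₂, x₁ - Complex.I*x₂) := rfl
    rw [hTx, hσ]
    rw [Prod.ext_iff]
    constructor
    · show (σ (x₁ - Complex.I*x₂) + σ (x₁ + Complex.I*x₂))/2 = _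
      rw [map_add, map_sub, map_mul, hσI, ← hform x₁]
      ring
    · show (σ (x₁ - Complex.I*x₂) - σ (x₁ + Complex.I*x₂))/(2*Complex.I) = _
      rw [map_add, map_sub, map_mul, hσI, ← hform x₂]
      field_simp
      ring
end

section
/- Let f : ℂ² → ℂ² preserve unit distance, with f((0,0)) = (0,0), f((1,0)) = (1,0) and f((0,1)) = (0,1). Then there exists a field homomorphism (ring homomorphism) γ : ℂ → ℂ such that f((x₁,x₂)) = (γ(x₁), γ(x₂)) for all x₁, x₂ ∈ ℂ. -/
noncomputable section
namespace BQThm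

def Qd (p q : ℂ × ℂ) : ℂ := (p.1 - q.1) * (p.2 - q.2)

def Pres (F : ℂ × ℂ → ℂ × ℂ) (c : ℂ) : Prop :=
  ∀ p q : ℂ × ℂ, Qd p q = c → Qd (F p) (F q) = c

lemma Pres_congr {F : ℂ × ℂ → ℂ × ℂ} {c c' : ℂ} (h : c = c') (hp : Pres F c) : Pres F c' := h ▸ hp

lemma exists_sqrt (z : ℂ) : ∃ w : ℂ, w ^ 2 = z := by
  rcases IsAlgClosed.exists_pow_nat_eq z (n := 2) two_pos with ⟨w, hw⟩
  exact ⟨w, hw⟩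

lemma quad_roots {a : ℂ} (b c : ℂ) (ha : a ≠ 0) (hd : b ^ 2 - 4 * a * c ≠ 0) :
    ∃ t1 t2 : ℂ, t1 ≠ t2 ∧ a * t1 ^ 2 + b * t1 + c = 0 ∧ a * t2 ^ 2 + b * t2 + c = 0 ∧
      a * (t1 + t2) = -b ∧ a * (t1 * t2) = c := by
  obtain ⟨w, hw⟩ := exists_sqrt (b ^ 2 - 4 * a * c)
  have hw0 : w ≠ 0 := by
    intro h; rw [h] at hw; exact hd (by linear_combination -hw)
  have h2a : (2 : ℂ) * a ≠ 0 := mul_ne_zero two_ne_zero ha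
  refine ⟨(-b + w) / (2 * a), (-b - w) / (2 * a), ?_, ?_, ?_, ?_, ?_⟩
  · intro h
    apply hw0
    rw [div_eq_div_iff h2a h2a] at h
    have h2 : (2:ℂ) * a * w = 0 := by linear_combination (1/2 : ℂ) * h
    rcases mul_eq_zero.1 h2 with h' | h'
    · exact absurd h' h2a
    · exact h'
  · have : a * ((-b + w) / (2 * a)) ^ 2 + b * ((-b + w) / (2 * a)) + c
        = (w ^ 2 - (b ^ 2 - 4 * a * c)) / (4 * a) := by field_simp; ring
    rw [this, hw]; simp
  · have : a * ((-b - w) / (2 * a)) ^ 2 + b * ((-b - w) / (2 * a)) + c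
        = (w ^ 2 - (b ^ 2 - 4 * a * c)) / (4 * a) := by field_simp; ring
    rw [this, hw]; simp
  · field_simp; ring
  · have : ((-b + w) / (2 * a)) * ((-b - w) / (2 * a)) = (b^2 - w^2) / (4 * a^2) := by
      field_simp; ring
    rw [this, hw]; field_simp; ring

lemma quad_root1 {a : ℂ} (b c : ℂ) (ha : a ≠ 0) (hc : c ≠ 0) :
    ∃ t : ℂ, t ≠ 0 ∧ a * t ^ 2 + b * t + c = 0 := by
  obtain ⟨w, hw⟩ := exists_sqrt (b ^ 2 - 4 * a * c)
  refine ⟨(-b + w) / (2 * a), ?_, ?_⟩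
  · intro h
    have h2a : (2 : ℂ) * a ≠ 0 := mul_ne_zero two_ne_zero ha
    have hbw : -b + w = 0 := by
      field_simp at h; linear_combination h
    have hw2 : w ^ 2 = b ^ 2 := by rw [show w = b by linear_combination hbw]
    rw [hw2] at hw
    have : (4:ℂ) * a * c = 0 := by linear_combination hw
    rcases mul_eq_zero.1 this with h' | h'
    · rcases mul_eq_zero.1 h' with h'' | h''
      · norm_num at h''
      · exact ha h''
    · exact hc h'
  · have : a * ((-b + w) / (2 * a)) ^ 2 + b * ((-b + w) / (2 * a)) + c
        = (w ^ 2 - (b ^ 2 - 4 * a * c)) / (4 * a) := by field_simp; ring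
    rw [this, hw]; simp


lemma sphere_pt (x y : ℂ × ℂ) (B C e d t : ℂ) (hB : y.1 - x.1 = B) (hC : y.2 - x.2 = C)
    (ht : t ≠ 0) (heq : C * t ^ 2 - (e + B * C - d) * t + e * B = 0) :
    Qd (x.1 + t, x.2 + e * t⁻¹) x = e ∧ Qd (x.1 + t, x.2 + e * t⁻¹) y = d := by
  constructor
  · show (x.1 + t - x.1) * (x.2 + e * t⁻¹ - x.2) = e
    have e0 : (x.1 + t - x.1) * (x.2 + e * t⁻¹ - x.2) = e * (t * t⁻¹) := by ring
    rw [e0, mul_inv_cancel₀ ht, mul_one]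
  · show (x.1 + t - y.1) * (x.2 + e * t⁻¹ - y.2) = d
    have e1 : x.1 + t - y.1 = t - B := by rw [← hB]; ring
    have e2 : x.2 + e * t⁻¹ - y.2 = e * t⁻¹ - C := by rw [← hC]; ring
    have key : (t - B) * (e - C * t) = d * t := by linear_combination -heq
    have e4 : (e - C * t) * t⁻¹ = e * t⁻¹ - C := by
      rw [sub_mul, mul_inv_cancel_right₀ ht]
    rw [e1, e2, ← e4, ← mul_assoc, key, mul_inv_cancel_right₀ ht]

lemma sphere_pair (x : ℂ × ℂ) (e t1 t2 g : ℂ) (h1 : t1 ≠ 0) (h2 : t2 ≠ 0)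
    (hg : -(e * (t1 - t2) ^ 2) = g * (t1 * t2)) :
    Qd (x.1 + t1, x.2 + e * t1⁻¹) (x.1 + t2, x.2 + e * t2⁻¹) = g := by
  show (x.1 + t1 - (x.1 + t2)) * (x.2 + e * t1⁻¹ - (x.2 + e * t2⁻¹)) = g
  have e1 : x.1 + t1 - (x.1 + t2) = t1 - t2 := by ring
  have e2 : x.2 + e * t1⁻¹ - (x.2 + e * t2⁻¹) = -(e * (t1 - t2)) * (t1 * t2)⁻¹ := by
    field_simp; ring
  rw [e1, e2]
  have e3 : (t1 - t2) * (-(e * (t1 - t2)) * (t1 * t2)⁻¹) = -(e * (t1 - t2) ^ 2) * (t1 * t2)⁻¹ := by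
    ring
  rw [e3, hg, mul_assoc, mul_inv_cancel₀ (mul_ne_zero h1 h2), mul_one]

lemma down_core {e g b c ta sa tb sb : ℂ} (he : e ≠ 0) (hg0 : g ≠ 0)
    (hts1 : ta * sa = e) (hts2 : tb * sb = e)
    (h1y : (ta - b) * (sa - c) = e) (h2y : (tb - b) * (sb - c) = e)
    (h12 : (ta - tb) * (sa - sb) = g)
    (hbc : ¬(b = 0 ∧ c = 0)) : b * c = 4 * e - g := by
  have hta0 : ta ≠ 0 := fun h => he (by rw [← hts1, h, zero_mul])
  have hsa0 : sa ≠ 0 := fun h => he (by rw [← hts1, h, mul_zero])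
  have hc0 : c ≠ 0 := by
    intro hc
    rw [hc] at h1y
    have hb : b * sa = 0 := by linear_combination hts1 - h1y
    rcases mul_eq_zero.1 hb with hb | hb
    · exact hbc ⟨hb, hc⟩
    · exact hsa0 hb
  have hb0 : b ≠ 0 := by
    intro hb
    rw [hb] at h1y
    have hcz : ta * c = 0 := by linear_combination hts1 - h1y
    rcases mul_eq_zero.1 hcz with h' | h'
    · exact hta0 h'
    · exact hc0 h'
  have R1 : ta * c + b * sa = b * c := by linear_combination hts1 - h1y
  have R2 : tb * c + b * sb = b * c := by linear_combination hts2 - h2y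
  have P1 : c * ta ^ 2 - b * c * ta + e * b = 0 := by linear_combination ta * R1 - b * hts1
  have P2 : c * tb ^ 2 - b * c * tb + e * b = 0 := by linear_combination tb * R2 - b * hts2
  have htne : ta - tb ≠ 0 := fun h => hg0 (by rw [← h12, h, zero_mul])
  have h5 : (ta - tb) * (c * (ta + tb) - b * c) = 0 := by linear_combination P1 - P2
  have hsum : ta + tb = b := by
    have h6 := (mul_eq_zero.1 h5).resolve_left htne
    have h7 : c * (ta + tb) = c * b := by linear_combination h6
    exact mul_left_cancel₀ hc0 h7
  have hprod : c * (ta * tb) = e * b := by linear_combination -P1 + c * ta * hsum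
  have key : -(e * (ta - tb) ^ 2) = g * (ta * tb) := by
    linear_combination (ta * tb) * h12 - (ta - tb) * tb * hts1 + (ta - tb) * ta * hts2
  have h6 : (4 * e - g) * (ta * tb) = e * b ^ 2 := by
    linear_combination key + e * (b + ta + tb) * hsum
  have h7 : e * b * (4 * e - g) = e * b * (b * c) := by
    linear_combination c * h6 - (4 * e - g) * hprod
  exact (mul_left_cancel₀ (mul_ne_zero he hb0) h7).symm

lemma weak3 {F : ℂ × ℂ → ℂ × ℂ} (h1 : Pres F 1) :
    ∀ x y : ℂ × ℂ, Qd x y = 3 → (Qd (F x) (F y) = 3 ∨ F x = F y) := by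
  intro x y hxy
  by_cases hFxy : F x = F y
  · exact Or.inr hFxy
  left
  have hBC : (y.1 - x.1) * (y.2 - x.2) = 3 := by
    simp only [Qd] at hxy; linear_combination hxy
  set B := y.1 - x.1 with hB
  set C := y.2 - x.2 with hC
  have hB0 : B ≠ 0 := by
    intro h; rw [h, zero_mul] at hBC; exact absurd hBC (by norm_num)
  have hC0 : C ≠ 0 := by
    intro h; rw [h, mul_zero] at hBC; exact absurd hBC (by norm_num)
  have hCB : C * B = 3 := by linear_combination hBC
  have hd : (-(1 + B * C - 1)) ^ 2 - 4 * C * (1 * B) ≠ 0 := by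
    have : (-(1 + B * C - 1)) ^ 2 - 4 * C * (1 * B) = -3 := by
      have hBC' : B * C = 3 := by linear_combination hBC
      rw [hBC']; ring_nf; linear_combination -4 * hCB
    rw [this]; norm_num
  obtain ⟨t1, t2, htne, hr1, hr2, hsum, hprod⟩ :=
    quad_roots (a := C) (-(1 + B * C - 1)) (1 * B) hC0 hd
  have ht10 : t1 ≠ 0 := by
    intro h; rw [h, zero_mul, mul_zero] at hprod
    exact hB0 (by linear_combination -hprod)
  have ht20 : t2 ≠ 0 := by
    intro h; rw [h, mul_zero, mul_zero] at hprod
    exact hB0 (by linear_combination -hprod)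
  obtain ⟨hz1x, hz1y⟩ := sphere_pt x y B C 1 1 t1 rfl rfl ht10 (by linear_combination hr1)
  obtain ⟨hz2x, hz2y⟩ := sphere_pt x y B C 1 1 t2 rfl rfl ht20 (by linear_combination hr2)
  have hCC : C ^ 2 * (t1 - t2) ^ 2 = -3 := by
    have hsum' : C * (t1 + t2) = 1 + B * C - 1 := by linear_combination hsum
    have hprod' : C * (t1 * t2) = B := by linear_combination hprod
    linear_combination (C * (t1 + t2) + B * C) * hsum' - 4 * C * hprod' + (C * B - 1) * hCB
  have hg1 : -((1:ℂ) * (t1 - t2) ^ 2) = 1 * (t1 * t2) := by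
    have hprod' : C * (t1 * t2) = B := by linear_combination hprod
    have h9 : C ^ 2 * (-((1:ℂ) * (t1 - t2) ^ 2)) = C ^ 2 * (1 * (t1 * t2)) := by
      linear_combination -hCC - C * hprod' - hCB
    exact mul_left_cancel₀ (pow_ne_zero 2 hC0) h9
  have hz12 := sphere_pair x 1 t1 t2 1 ht10 ht20 hg1
  -- downstream
  have d1x := h1 _ _ hz1x
  have d1y := h1 _ _ hz1y
  have d2x := h1 _ _ hz2x
  have d2y := h1 _ _ hz2y
  have d12 := h1 _ _ hz12
  simp only [Qd] at d1x d1y d2x d2y d12 ⊢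
  set z1 : ℂ × ℂ := (x.1 + t1, x.2 + 1 * t1⁻¹) with hz1def
  set z2 : ℂ × ℂ := (x.1 + t2, x.2 + 1 * t2⁻¹) with hz2def
  set b := (F y).1 - (F x).1 with hbdef
  set cc := (F y).2 - (F x).2 with hcdef
  set ta := (F z1).1 - (F x).1 with htadef
  set sa := (F z1).2 - (F x).2 with hsadef
  set tb := (F z2).1 - (F x).1 with htbdef
  set sb := (F z2).2 - (F x).2 with hsbdef
  have hbc : ¬(b = 0 ∧ cc = 0) := by
    rintro ⟨hb, hc⟩
    apply hFxy
    have e1 : (F x).1 = (F y).1 := by linear_combination -hb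
    have e2 : (F x).2 = (F y).2 := by linear_combination -hc
    exact Prod.ext e1 e2
  have hcore := down_core (e := 1) (g := 1) (b := b) (c := cc) (ta := ta) (sa := sa)
    (tb := tb) (sb := sb) one_ne_zero one_ne_zero
    (by linear_combination d1x) (by linear_combination d2x)
    (by linear_combination d1y) (by linear_combination d2y)
    (by linear_combination d12) hbc
  linear_combination hcore

lemma exists_13 {x y : ℂ × ℂ} {κ : ℂ}
    (hxy : (y.1 - x.1) * (y.2 - x.2) = κ) (hκ : κ ≠ 0) :
    ∃ z : ℂ × ℂ, Qd z x = 1 ∧ Qd z y = 3 := by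
  set B := y.1 - x.1 with hB
  set C := y.2 - x.2 with hC
  have hB0 : B ≠ 0 := by
    intro h; rw [h, zero_mul] at hxy; exact hκ hxy.symm
  have hC0 : C ≠ 0 := by
    intro h; rw [h, mul_zero] at hxy; exact hκ hxy.symm
  obtain ⟨t, ht0, hroot⟩ := quad_root1 (a := C) (-(1 + B * C - 3)) (1 * B) hC0
    (by simpa using hB0)
  obtain ⟨hx, hy⟩ := sphere_pt x y B C 1 3 t rfl rfl ht0 (by linear_combination hroot)
  exact ⟨_, hx, hy⟩

lemma image_ne {F : ℂ × ℂ → ℂ × ℂ} (h1 : Pres F 1) (h3 : Pres F 3) {x y : ℂ × ℂ} {κ : ℂ}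
    (hxy : (y.1 - x.1) * (y.2 - x.2) = κ) (hκ : κ ≠ 0) : F x ≠ F y := by
  obtain ⟨z, hz1, hz3⟩ := exists_13 hxy hκ
  intro h
  have e1 := h1 _ _ hz1
  have e3 := h3 _ _ hz3
  rw [← h] at e3
  exact absurd (e1.symm.trans e3) (by norm_num)

lemma pres3 {F : ℂ × ℂ → ℂ × ℂ} (h1 : Pres F 1) : Pres F 3 := by
  intro x y hxy
  have hBC : (y.1 - x.1) * (y.2 - x.2) = 3 := by
    simp only [Qd] at hxy; linear_combination hxy
  obtain ⟨z0, hz0x, hz0y⟩ := exists_13 hBC (by norm_num)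
  rcases weak3 h1 x y hxy with h | h
  · exact h
  · exfalso
    have d0x := h1 _ _ hz0x
    rcases weak3 h1 z0 y hz0y with h3' | he
    · rw [← h] at h3'
      exact absurd (d0x.symm.trans h3') (by norm_num)
    · have : Qd (F z0) (F x) = 0 := by rw [he, h]; simp [Qd]
      exact absurd (d0x.symm.trans this) (by norm_num)

lemma presR {F : ℂ × ℂ → ℂ × ℂ} (h1 : Pres F 1) (h3 : Pres F 3) (e g : ℂ)
    (he : Pres F e) (hg : Pres F g) (he0 : e ≠ 0) (hg0 : g ≠ 0) (hκ0 : 4 * e - g ≠ 0) :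
    Pres F (4 * e - g) := by
  intro x y hxy
  have hBC : (y.1 - x.1) * (y.2 - x.2) = 4 * e - g := by
    simp only [Qd] at hxy; linear_combination hxy
  set B := y.1 - x.1 with hB
  set C := y.2 - x.2 with hC
  have hB0 : B ≠ 0 := by
    intro h; rw [h, zero_mul] at hBC; exact hκ0 hBC.symm
  have hC0 : C ≠ 0 := by
    intro h; rw [h, mul_zero] at hBC; exact hκ0 hBC.symm
  have hCB : C * B = 4 * e - g := by linear_combination hBC
  have hdval : (-(e + B * C - e)) ^ 2 - 4 * C * (e * B) = -((4 * e - g) * g) := by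
    linear_combination (C * B - g) * hCB
  have hd : (-(e + B * C - e)) ^ 2 - 4 * C * (e * B) ≠ 0 := by
    rw [hdval]; exact neg_ne_zero.2 (mul_ne_zero hκ0 hg0)
  obtain ⟨t1, t2, htne, hr1, hr2, hsum, hprod⟩ :=
    quad_roots (a := C) (-(e + B * C - e)) (e * B) hC0 hd
  have hP : C * (t1 * t2) = e * B := by linear_combination hprod
  have hS : C * (t1 + t2) = e + B * C - e := by linear_combination hsum
  have ht10 : t1 ≠ 0 := by
    intro h; rw [h, zero_mul, mul_zero] at hprod
    exact (mul_ne_zero he0 hB0) (by linear_combination -hprod)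
  have ht20 : t2 ≠ 0 := by
    intro h; rw [h, mul_zero, mul_zero] at hprod
    exact (mul_ne_zero he0 hB0) (by linear_combination -hprod)
  obtain ⟨hz1x, hz1y⟩ := sphere_pt x y B C e e t1 rfl rfl ht10 (by linear_combination hr1)
  obtain ⟨hz2x, hz2y⟩ := sphere_pt x y B C e e t2 rfl rfl ht20 (by linear_combination hr2)
  have h9 : C ^ 2 * (-(e * (t1 - t2) ^ 2)) = C ^ 2 * (g * (t1 * t2)) := by
    linear_combination (-(e) * (C * (t1 + t2) + B * C)) * hS + (4 * e - g) * C * hP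
      + (-(e) * (C * B)) * hCB
  have hgpair := mul_left_cancel₀ (pow_ne_zero 2 hC0) h9
  have hz12 := sphere_pair x e t1 t2 g ht10 ht20 hgpair
  -- downstream
  have hFne : F x ≠ F y := image_ne h1 h3 hBC hκ0
  have d1x := he _ _ hz1x
  have d1y := he _ _ hz1y
  have d2x := he _ _ hz2x
  have d2y := he _ _ hz2y
  have d12 := hg _ _ hz12
  simp only [Qd] at d1x d1y d2x d2y d12 ⊢
  obtain ⟨b, c, hb, hc⟩ : ∃ b c, (F y).1 - (F x).1 = b ∧ (F y).2 - (F x).2 = c :=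
    ⟨_, _, rfl, rfl⟩
  obtain ⟨ta, sa, hta, hsa⟩ : ∃ u v, (F (x.1 + t1, x.2 + e * t1⁻¹)).1 - (F x).1 = u ∧
      (F (x.1 + t1, x.2 + e * t1⁻¹)).2 - (F x).2 = v := ⟨_, _, rfl, rfl⟩
  obtain ⟨tb, sb, htb, hsb⟩ : ∃ u v, (F (x.1 + t2, x.2 + e * t2⁻¹)).1 - (F x).1 = u ∧
      (F (x.1 + t2, x.2 + e * t2⁻¹)).2 - (F x).2 = v := ⟨_, _, rfl, rfl⟩
  have hbc : ¬(b = 0 ∧ c = 0) := by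
    rintro ⟨hb0, hc0⟩
    apply hFne
    apply Prod.ext
    · rw [hb0] at hb; linear_combination -hb
    · rw [hc0] at hc; linear_combination -hc
  have hcore := down_core (e := e) (g := g) (b := b) (c := c) (ta := ta) (sa := sa)
    (tb := tb) (sb := sb) he0 hg0
    (by rw [← hta, ← hsa]; linear_combination d1x)
    (by rw [← htb, ← hsb]; linear_combination d2x)
    (by rw [← hta, ← hsa, ← hb, ← hc]; linear_combination d1y)
    (by rw [← htb, ← hsb, ← hb, ← hc]; linear_combination d2y)
    (by rw [← hta, ← hsa, ← htb, ← hsb]; linear_combination d12) hbc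
  rw [← hb, ← hc] at hcore
  linear_combination hcore

lemma down_core2 {a d b c ta sa tb sb : ℂ} (ha : a ≠ 0) (hd : d ≠ 0) (hm : a - d ≠ 0)
    (hts1 : ta * sa = a) (hts2 : tb * sb = a)
    (h1y : (ta - b) * (sa - c) = d) (h2y : (tb - b) * (sb - c) = d)
    (h12 : (ta - tb) * (sa - sb) = 4 * d) : b * c = a - d := by
  have h4d : (4 : ℂ) * d ≠ 0 := mul_ne_zero (by norm_num : (4:ℂ) ≠ 0) hd
  have htne : ta - tb ≠ 0 := fun h => h4d (by rw [← h12, h, zero_mul])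
  have R1 : ta * c + b * sa = b * c + a - d := by linear_combination hts1 - h1y
  have R2 : tb * c + b * sb = b * c + a - d := by linear_combination hts2 - h2y
  have hc0 : c ≠ 0 := by
    intro hc
    rw [hc] at R1 R2
    have hb0 : b ≠ 0 := by
      intro hb; rw [hb] at R1; apply hm; linear_combination -R1
    have hss : sa = sb := by
      apply mul_left_cancel₀ hb0
      linear_combination R1 - R2
    rw [hss, sub_self, mul_zero] at h12
    exact h4d h12.symm
  have hb0 : b ≠ 0 := by
    intro hb
    rw [hb] at R1 R2
    have htt : ta = tb := by
      apply mul_right_cancel₀ hc0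
      linear_combination R1 - R2
    exact htne (by rw [htt, sub_self])
  have P1 : c * ta ^ 2 - (b * c + a - d) * ta + a * b = 0 := by
    linear_combination ta * R1 - b * hts1
  have P2 : c * tb ^ 2 - (b * c + a - d) * tb + a * b = 0 := by
    linear_combination tb * R2 - b * hts2
  have h5 : (ta - tb) * (c * (ta + tb) - (b * c + a - d)) = 0 := by linear_combination P1 - P2
  have hS : c * (ta + tb) = b * c + a - d := by
    have := (mul_eq_zero.1 h5).resolve_left htne
    linear_combination this
  have hprod : c * (ta * tb) = a * b := by linear_combination -P1 + ta * hS
  have key : -(a * (ta - tb) ^ 2) = (4 * d) * (ta * tb) := by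
    linear_combination (ta * tb) * h12 - (ta - tb) * tb * hts1 + (ta - tb) * ta * hts2
  have e1 : c ^ 2 * (ta - tb) ^ 2 = (b * c + a - d) ^ 2 - 4 * c * (a * b) := by
    have h7 : c ^ 2 * (ta - tb) ^ 2 = (c * (ta + tb)) ^ 2 - 4 * c * (c * (ta * tb)) := by ring
    rw [hS, hprod] at h7
    linear_combination h7
  have e2 : -(a * (c ^ 2 * (ta - tb) ^ 2)) = 4 * d * c * (a * b) := by
    linear_combination c ^ 2 * key + 4 * d * c * hprod
  have e3 : a * ((b * c) - (a - d)) ^ 2 = 0 := by linear_combination -e2 - a * e1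
  have e4 := (mul_eq_zero.1 e3).resolve_left ha
  have e5 : b * c - (a - d) = 0 := sq_eq_zero_iff.1 e4
  linear_combination e5

lemma presR2 {F : ℂ × ℂ → ℂ × ℂ} (h1 : Pres F 1) (h3 : Pres F 3) (a d : ℂ)
    (ha : Pres F a) (hd : Pres F d) (h4d : Pres F (4 * d))
    (ha0 : a ≠ 0) (hd0 : d ≠ 0) (hne : a - d ≠ 0) : Pres F (a - d) := by
  intro x y hxy
  have hBC : (y.1 - x.1) * (y.2 - x.2) = a - d := by
    simp only [Qd] at hxy; linear_combination hxy
  set B := y.1 - x.1 with hB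
  set C := y.2 - x.2 with hC
  have hB0 : B ≠ 0 := by
    intro h; rw [h, zero_mul] at hBC; exact hne hBC.symm
  have hC0 : C ≠ 0 := by
    intro h; rw [h, mul_zero] at hBC; exact hne hBC.symm
  have hCB : C * B = a - d := by linear_combination hBC
  have hdval : (-(a + B * C - d)) ^ 2 - 4 * C * (a * B) = -(4 * (a - d) * d) := by
    linear_combination (C * B - (a - d) - 4 * d) * hCB
  have hdd : (-(a + B * C - d)) ^ 2 - 4 * C * (a * B) ≠ 0 := by
    rw [hdval]
    exact neg_ne_zero.2 (mul_ne_zero (mul_ne_zero (by norm_num : (4:ℂ) ≠ 0) hne) hd0)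
  obtain ⟨t1, t2, htne, hr1, hr2, hsum, hprod⟩ :=
    quad_roots (a := C) (-(a + B * C - d)) (a * B) hC0 hdd
  have hP : C * (t1 * t2) = a * B := by linear_combination hprod
  have hS : C * (t1 + t2) = a + B * C - d := by linear_combination hsum
  have ht10 : t1 ≠ 0 := by
    intro h; rw [h, zero_mul, mul_zero] at hprod
    exact (mul_ne_zero ha0 hB0) (by linear_combination -hprod)
  have ht20 : t2 ≠ 0 := by
    intro h; rw [h, mul_zero, mul_zero] at hprod
    exact (mul_ne_zero ha0 hB0) (by linear_combination -hprod)
  obtain ⟨hz1x, hz1y⟩ := sphere_pt x y B C a d t1 rfl rfl ht10 (by linear_combination hr1)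
  obtain ⟨hz2x, hz2y⟩ := sphere_pt x y B C a d t2 rfl rfl ht20 (by linear_combination hr2)
  have h9 : C ^ 2 * (-(a * (t1 - t2) ^ 2)) = C ^ 2 * ((4 * d) * (t1 * t2)) := by
    linear_combination (-(a) * (C * (t1 + t2) + (a + B * C - d))) * hS
      + (4 * a - 4 * d) * C * hP + (-(a) * (C * B - (a - d))) * hCB
  have hgpair := mul_left_cancel₀ (pow_ne_zero 2 hC0) h9
  have hz12 := sphere_pair x a t1 t2 (4 * d) ht10 ht20 hgpair
  -- downstream
  have d1x := ha _ _ hz1x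
  have d1y := hd _ _ hz1y
  have d2x := ha _ _ hz2x
  have d2y := hd _ _ hz2y
  have d12 := h4d _ _ hz12
  simp only [Qd] at d1x d1y d2x d2y d12 ⊢
  obtain ⟨b, c, hb, hc⟩ : ∃ b c, (F y).1 - (F x).1 = b ∧ (F y).2 - (F x).2 = c :=
    ⟨_, _, rfl, rfl⟩
  obtain ⟨ta, sa, hta, hsa⟩ : ∃ u v, (F (x.1 + t1, x.2 + a * t1⁻¹)).1 - (F x).1 = u ∧
      (F (x.1 + t1, x.2 + a * t1⁻¹)).2 - (F x).2 = v := ⟨_, _, rfl, rfl⟩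
  obtain ⟨tb, sb, htb, hsb⟩ : ∃ u v, (F (x.1 + t2, x.2 + a * t2⁻¹)).1 - (F x).1 = u ∧
      (F (x.1 + t2, x.2 + a * t2⁻¹)).2 - (F x).2 = v := ⟨_, _, rfl, rfl⟩
  have hcore := down_core2 (a := a) (d := d) (b := b) (c := c) (ta := ta) (sa := sa)
    (tb := tb) (sb := sb) ha0 hd0 hne
    (by rw [← hta, ← hsa]; linear_combination d1x)
    (by rw [← htb, ← hsb]; linear_combination d2x)
    (by rw [← hta, ← hsa, ← hb, ← hc]; linear_combination d1y)
    (by rw [← htb, ← hsb, ← hb, ← hc]; linear_combination d2y)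
    (by rw [← hta, ← hsa, ← htb, ← hsb]; linear_combination d12)
  rw [← hb, ← hc] at hcore
  linear_combination hcore

lemma pres4 {F : ℂ × ℂ → ℂ × ℂ} (h1 : Pres F 1) (h3 : Pres F 3) : Pres F 4 := by
  have hs3 : ((Real.sqrt 3 : ℝ) : ℂ) ^ 2 = 3 := by
    rw [← Complex.ofReal_pow, Real.sq_sqrt (by norm_num : (0:ℝ) ≤ 3)]; norm_num
  have hIs : (Complex.I * (Real.sqrt 3 : ℝ)) ^ 2 = -3 := by
    rw [mul_pow, Complex.I_sq, hs3]; ring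
  set ζ1 : ℂ := (1 + Complex.I * (Real.sqrt 3 : ℝ)) / 2 with hζ1
  set ζ2 : ℂ := (1 - Complex.I * (Real.sqrt 3 : ℝ)) / 2 with hζ2
  have hzsum : ζ1 + ζ2 = 1 := by rw [hζ1, hζ2]; ring
  have hzprod : ζ1 * ζ2 = 1 := by rw [hζ1, hζ2]; linear_combination (-1/4 : ℂ) * hIs
  intro x y hxy
  have hBC : (y.1 - x.1) * (y.2 - x.2) = 4 := by
    simp only [Qd] at hxy; linear_combination hxy
  -- configuration points
  set m : ℂ × ℂ := (x.1 + (y.1 - x.1) / 2, x.2 + (y.2 - x.2) / 2) with hm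
  set r1 : ℂ × ℂ := (x.1 + (y.1 - x.1) * ζ1 / 2, x.2 + (y.2 - x.2) * ζ2 / 2) with hr1
  set r2 : ℂ × ℂ := (x.1 + (y.1 - x.1) * ζ2 / 2, x.2 + (y.2 - x.2) * ζ1 / 2) with hr2
  have hmx : Qd m x = 1 := by
    show (x.1 + (y.1 - x.1) / 2 - x.1) * (x.2 + (y.2 - x.2) / 2 - x.2) = 1
    linear_combination (1/4 : ℂ) * hBC
  have hym : Qd y m = 1 := by
    show (y.1 - (x.1 + (y.1 - x.1) / 2)) * (y.2 - (x.2 + (y.2 - x.2) / 2)) = 1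
    linear_combination (1/4 : ℂ) * hBC
  have hr1x : Qd r1 x = 1 := by
    show (x.1 + (y.1 - x.1) * ζ1 / 2 - x.1) * (x.2 + (y.2 - x.2) * ζ2 / 2 - x.2) = 1
    linear_combination (ζ1 * ζ2 / 4) * hBC + hzprod
  have hr2x : Qd r2 x = 1 := by
    show (x.1 + (y.1 - x.1) * ζ2 / 2 - x.1) * (x.2 + (y.2 - x.2) * ζ1 / 2 - x.2) = 1
    linear_combination (ζ1 * ζ2 / 4) * hBC + hzprod
  have hr1m : Qd r1 m = 1 := by
    show (x.1 + (y.1 - x.1) * ζ1 / 2 - (x.1 + (y.1 - x.1) / 2)) *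
      (x.2 + (y.2 - x.2) * ζ2 / 2 - (x.2 + (y.2 - x.2) / 2)) = 1
    linear_combination ((ζ1 * ζ2 - (ζ1 + ζ2) + 1) / 4) * hBC + hzprod - hzsum
  have hr2m : Qd r2 m = 1 := by
    show (x.1 + (y.1 - x.1) * ζ2 / 2 - (x.1 + (y.1 - x.1) / 2)) *
      (x.2 + (y.2 - x.2) * ζ1 / 2 - (x.2 + (y.2 - x.2) / 2)) = 1
    linear_combination ((ζ1 * ζ2 - (ζ1 + ζ2) + 1) / 4) * hBC + hzprod - hzsum
  have hr1y : Qd r1 y = 3 := by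
    show (x.1 + (y.1 - x.1) * ζ1 / 2 - y.1) * (x.2 + (y.2 - x.2) * ζ2 / 2 - y.2) = 3
    linear_combination ((ζ1 * ζ2 - 2 * (ζ1 + ζ2) + 4) / 4) * hBC + hzprod - 2 * hzsum
  have hr2y : Qd r2 y = 3 := by
    show (x.1 + (y.1 - x.1) * ζ2 / 2 - y.1) * (x.2 + (y.2 - x.2) * ζ1 / 2 - y.2) = 3
    linear_combination ((ζ1 * ζ2 - 2 * (ζ1 + ζ2) + 4) / 4) * hBC + hzprod - 2 * hzsum
  have hrr : Qd r1 r2 = 3 := by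
    show (x.1 + (y.1 - x.1) * ζ1 / 2 - (x.1 + (y.1 - x.1) * ζ2 / 2)) *
      (x.2 + (y.2 - x.2) * ζ2 / 2 - (x.2 + (y.2 - x.2) * ζ1 / 2)) = 3
    linear_combination (-(((ζ1 + ζ2) ^ 2 - 4 * (ζ1 * ζ2))) / 4) * hBC + 4 * hzprod
      - ((ζ1 + ζ2) + 1) * hzsum
  -- downstream
  have dmx := h1 _ _ hmx
  have dym := h1 _ _ hym
  have dr1x := h1 _ _ hr1x
  have dr2x := h1 _ _ hr2x
  have dr1m := h1 _ _ hr1m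
  have dr2m := h1 _ _ hr2m
  have dr1y := h3 _ _ hr1y
  have dr2y := h3 _ _ hr2y
  have drr := h3 _ _ hrr
  simp only [Qd] at dmx dym dr1x dr2x dr1m dr2m dr1y dr2y drr ⊢
  obtain ⟨μ, ν, hμ, hν⟩ : ∃ u v, (F m).1 - (F x).1 = u ∧ (F m).2 - (F x).2 = v :=
    ⟨_, _, rfl, rfl⟩
  obtain ⟨σ, τ, hσ, hτ⟩ : ∃ u v, (F y).1 - (F m).1 = u ∧ (F y).2 - (F m).2 = v :=
    ⟨_, _, rfl, rfl⟩
  obtain ⟨t1, s1, ht1, hs1⟩ : ∃ u v, (F r1).1 - (F x).1 = u ∧ (F r1).2 - (F x).2 = v :=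
    ⟨_, _, rfl, rfl⟩
  obtain ⟨t2, s2, ht2, hs2⟩ : ∃ u v, (F r2).1 - (F x).1 = u ∧ (F r2).2 - (F x).2 = v :=
    ⟨_, _, rfl, rfl⟩
  have hμν : μ * ν = 1 := by rw [← hμ, ← hν]; linear_combination dmx
  have hστ : σ * τ = 1 := by rw [← hσ, ← hτ]; linear_combination dym
  have hts1 : t1 * s1 = 1 := by rw [← ht1, ← hs1]; linear_combination dr1x
  have hts2 : t2 * s2 = 1 := by rw [← ht2, ← hs2]; linear_combination dr2x
  have hm1 : (t1 - μ) * (s1 - ν) = 1 := by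
    rw [← ht1, ← hs1, ← hμ, ← hν]; linear_combination dr1m
  have hm2 : (t2 - μ) * (s2 - ν) = 1 := by
    rw [← ht2, ← hs2, ← hμ, ← hν]; linear_combination dr2m
  have hy1 : (t1 - μ - σ) * (s1 - ν - τ) = 3 := by
    rw [← ht1, ← hs1, ← hμ, ← hν, ← hσ, ← hτ]; linear_combination dr1y
  have hy2 : (t2 - μ - σ) * (s2 - ν - τ) = 3 := by
    rw [← ht2, ← hs2, ← hμ, ← hν, ← hσ, ← hτ]; linear_combination dr2y
  have h12 : (t1 - t2) * (s1 - s2) = 3 := by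
    rw [← ht1, ← hs1, ← ht2, ← hs2]; linear_combination drr
  have hQ1 : ν * t1 ^ 2 - t1 + μ = 0 := by
    linear_combination (-t1) * hm1 + (t1 - μ) * hts1 + t1 * hμν
  have hQ2 : ν * t2 ^ 2 - t2 + μ = 0 := by
    linear_combination (-t2) * hm2 + (t2 - μ) * hts2 + t2 * hμν
  have D1 : t1 * (1 - σ * ν) + (σ - μ ^ 2 * τ) = 0 := by
    linear_combination (-t1) * hy1 + (t1 - μ - σ) * hts1 + (-1 - τ * μ) * hQ1
      + (t1 + τ * t1 ^ 2) * hμν + t1 * hστ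
  have D2 : t2 * (1 - σ * ν) + (σ - μ ^ 2 * τ) = 0 := by
    linear_combination (-t2) * hy2 + (t2 - μ - σ) * hts2 + (-1 - τ * μ) * hQ2
      + (t2 + τ * t2 ^ 2) * hμν + t2 * hστ
  have htne : t1 - t2 ≠ 0 := by
    intro h; rw [h, zero_mul] at h12; exact absurd h12 (by norm_num)
  have hfac : (t1 - t2) * (1 - σ * ν) = 0 := by linear_combination D1 - D2
  have hσν : σ * ν = 1 := by
    have := (mul_eq_zero.1 hfac).resolve_left htne
    linear_combination -this
  have hν0 : ν ≠ 0 := fun h => by rw [h, mul_zero] at hμν; exact absurd hμν (by norm_num)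
  have hμ0 : μ ≠ 0 := fun h => by rw [h, zero_mul] at hμν; exact absurd hμν (by norm_num)
  have hσμ : σ = μ := mul_right_cancel₀ hν0 (hσν.trans hμν.symm)
  have hτν : τ = ν := by
    apply mul_left_cancel₀ hμ0
    rw [← hσμ] at hμν ⊢
    exact hστ.trans hμν.symm
  have hgoal : ((F x).1 - (F y).1) * ((F x).2 - (F y).2) = (μ + σ) * (ν + τ) := by
    rw [← hμ, ← hν, ← hσ, ← hτ]; ring
  rw [hgoal, hσμ, hτν]
  linear_combination 4 * hμν

def sw (p : ℂ × ℂ) : ℂ × ℂ := (p.2, p.1)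

lemma pres_sw {F : ℂ × ℂ → ℂ × ℂ} {c : ℂ} (h : Pres F c) :
    Pres (fun p => sw (F (sw p))) c := by
  intro p q hpq
  have h0 : Qd (sw p) (sw q) = c := by
    simp only [Qd, sw] at hpq ⊢; linear_combination hpq
  have h2 := h _ _ h0
  simp only [Qd, sw] at h2 ⊢
  linear_combination h2

lemma pres0_line {F : ℂ × ℂ → ℂ × ℂ} (h1 : Pres F 1) (h3 : Pres F 3) (h2 : Pres F 2)
    (h4 : Pres F 4) (h8 : Pres F 8) (h10 : Pres F 10) :
    ∀ x y : ℂ × ℂ, x.1 = y.1 → Qd (F x) (F y) = 0 := by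
  intro x y hxy1
  by_cases hxy2 : x.2 = y.2
  · rw [show x = y from Prod.ext hxy1 hxy2]; simp [Qd]
  · set w := y.2 - x.2 with hw
    have hw0 : w ≠ 0 := sub_ne_zero.2 fun h => hxy2 h.symm
    have hy1 : y.1 = x.1 := hxy1.symm
    have hy2 : y.2 = x.2 + w := by rw [hw]; ring
    set z1 : ℂ × ℂ := (x.1 - 2 * w⁻¹, x.2 - w / 2) with hz1
    set z2 : ℂ × ℂ := (x.1 + 2 * w⁻¹, x.2 + 3 * w / 2) with hz2
    set z3 : ℂ × ℂ := (x.1 + 2 * w⁻¹, x.2 + 2 * w) with hz3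
    have hz1x : Qd z1 x = 1 := by
      show (x.1 - 2 * w⁻¹ - x.1) * (x.2 - w / 2 - x.2) = 1
      have : (x.1 - 2 * w⁻¹ - x.1) * (x.2 - w / 2 - x.2) = w * w⁻¹ := by ring
      rw [this, mul_inv_cancel₀ hw0]
    have hz1y : Qd z1 y = 3 := by
      show (x.1 - 2 * w⁻¹ - y.1) * (x.2 - w / 2 - y.2) = 3
      rw [hy1, hy2]
      have : (x.1 - 2 * w⁻¹ - x.1) * (x.2 - w / 2 - (x.2 + w)) = 3 * (w * w⁻¹) := by ring
      rw [this, mul_inv_cancel₀ hw0, mul_one]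
    have hz2x : Qd z2 x = 3 := by
      show (x.1 + 2 * w⁻¹ - x.1) * (x.2 + 3 * w / 2 - x.2) = 3
      have : (x.1 + 2 * w⁻¹ - x.1) * (x.2 + 3 * w / 2 - x.2) = 3 * (w * w⁻¹) := by ring
      rw [this, mul_inv_cancel₀ hw0, mul_one]
    have hz2y : Qd z2 y = 1 := by
      show (x.1 + 2 * w⁻¹ - y.1) * (x.2 + 3 * w / 2 - y.2) = 1
      rw [hy1, hy2]
      have : (x.1 + 2 * w⁻¹ - x.1) * (x.2 + 3 * w / 2 - (x.2 + w)) = w * w⁻¹ := by ring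
      rw [this, mul_inv_cancel₀ hw0]
    have hz3x : Qd z3 x = 4 := by
      show (x.1 + 2 * w⁻¹ - x.1) * (x.2 + 2 * w - x.2) = 4
      have : (x.1 + 2 * w⁻¹ - x.1) * (x.2 + 2 * w - x.2) = 4 * (w * w⁻¹) := by ring
      rw [this, mul_inv_cancel₀ hw0, mul_one]
    have hz3y : Qd z3 y = 2 := by
      show (x.1 + 2 * w⁻¹ - y.1) * (x.2 + 2 * w - y.2) = 2
      rw [hy1, hy2]
      have : (x.1 + 2 * w⁻¹ - x.1) * (x.2 + 2 * w - (x.2 + w)) = 2 * (w * w⁻¹) := by ring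
      rw [this, mul_inv_cancel₀ hw0, mul_one]
    have hz12 : Qd z1 z2 = 8 := by
      show (x.1 - 2 * w⁻¹ - (x.1 + 2 * w⁻¹)) * (x.2 - w / 2 - (x.2 + 3 * w / 2)) = 8
      have : (x.1 - 2 * w⁻¹ - (x.1 + 2 * w⁻¹)) * (x.2 - w / 2 - (x.2 + 3 * w / 2))
          = 8 * (w * w⁻¹) := by ring
      rw [this, mul_inv_cancel₀ hw0, mul_one]
    have hz13 : Qd z1 z3 = 10 := by
      show (x.1 - 2 * w⁻¹ - (x.1 + 2 * w⁻¹)) * (x.2 - w / 2 - (x.2 + 2 * w)) = 10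
      have : (x.1 - 2 * w⁻¹ - (x.1 + 2 * w⁻¹)) * (x.2 - w / 2 - (x.2 + 2 * w))
          = 10 * (w * w⁻¹) := by ring
      rw [this, mul_inv_cancel₀ hw0, mul_one]
    -- downstream
    have d1x := h1 _ _ hz1x
    have d1y := h3 _ _ hz1y
    have d2x := h3 _ _ hz2x
    have d2y := h1 _ _ hz2y
    have d3x := h4 _ _ hz3x
    have d3y := h2 _ _ hz3y
    have d12 := h8 _ _ hz12
    have d13 := h10 _ _ hz13
    simp only [Qd] at d1x d1y d2x d2y d3x d3y d12 d13 ⊢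
    by_contra hne0
    obtain ⟨b, c, hb, hc⟩ : ∃ b c, (F y).1 - (F x).1 = b ∧ (F y).2 - (F x).2 = c :=
      ⟨_, _, rfl, rfl⟩
    have hbc' : b * c ≠ 0 := by
      intro h
      apply hne0
      rw [← hb, ← hc] at h
      linear_combination h
    have hb0 : b ≠ 0 := left_ne_zero_of_mul hbc'
    have hc0 : c ≠ 0 := right_ne_zero_of_mul hbc'
    obtain ⟨t, s, ht, hs⟩ : ∃ u v, (F z1).1 - (F x).1 = u ∧ (F z1).2 - (F x).2 = v :=
      ⟨_, _, rfl, rfl⟩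
    obtain ⟨p, q, hp, hq⟩ : ∃ u v, (F z2).1 - (F x).1 = u ∧ (F z2).2 - (F x).2 = v :=
      ⟨_, _, rfl, rfl⟩
    obtain ⟨r, rr, hr, hrr⟩ : ∃ u v, (F z3).1 - (F x).1 = u ∧ (F z3).2 - (F x).2 = v :=
      ⟨_, _, rfl, rfl⟩
    have hts : t * s = 1 := by rw [← ht, ← hs]; linear_combination d1x
    have hpq : p * q = 3 := by rw [← hp, ← hq]; linear_combination d2x
    have hrρ : r * rr = 4 := by rw [← hr, ← hrr]; linear_combination d3x
    have H1 : (t - b) * (s - c) = 3 := by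
      rw [← ht, ← hs, ← hb, ← hc]; linear_combination d1y
    have H2 : (p - b) * (q - c) = 1 := by
      rw [← hp, ← hq, ← hb, ← hc]; linear_combination d2y
    have H3 : (r - b) * (rr - c) = 2 := by
      rw [← hr, ← hrr, ← hb, ← hc]; linear_combination d3y
    have H4 : (t - p) * (s - q) = 8 := by
      rw [← ht, ← hs, ← hp, ← hq]; linear_combination d12
    have H5 : (t - r) * (s - rr) = 10 := by
      rw [← ht, ← hs, ← hr, ← hrr]; linear_combination d13
    have ht0 : t ≠ 0 := fun h => by rw [h, zero_mul] at hts; exact absurd hts (by norm_num)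
    have E1 : c * t ^ 2 - (b * c - 2) * t + b = 0 := by
      linear_combination (-t) * H1 + (t - b) * hts
    have E2 : c * p ^ 2 - (b * c + 2) * p + 3 * b = 0 := by
      linear_combination (-p) * H2 + (p - b) * hpq
    have E3 : c * r ^ 2 - (b * c + 2) * r + 4 * b = 0 := by
      linear_combination (-r) * H3 + (r - b) * hrρ
    have E4 : (p + t) * (p + 3 * t) = 0 := by
      linear_combination (-(t * p)) * H4 + p * (t - p) * hts - t * (t - p) * hpq
    have E5 : (r + t) * (r + 4 * t) = 0 := by
      linear_combination (-(t * r)) * H5 + r * (t - r) * hts - t * (t - r) * hrρ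
    rcases mul_eq_zero.1 E4 with hpcase | hpcase
    · -- p = -t
      have hpt : p = -t := by linear_combination hpcase
      rw [hpt] at E2
      have hct : c * t + 1 = 0 := by
        have h6 : 2 * b * (c * t + 1) = 0 := by linear_combination E2 - E1
        exact (mul_eq_zero.1 h6).resolve_left (mul_ne_zero two_ne_zero hb0)
      rcases mul_eq_zero.1 E5 with hrcase | hrcase
      · have hrt : r = -t := by linear_combination hrcase
        rw [hrt] at E3
        have : b = 0 := by linear_combination E3 - E2
        exact hb0 this
      · have hrt : r = -(4 * t) := by linear_combination hrcase
        rw [hrt] at E3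
        have htz : -2 * t = 0 := by linear_combination (1/4 : ℂ) * E3 - (4 * t + b) * hct
        exact ht0 (by linear_combination (-1/2 : ℂ) * htz)
    · -- p = -3t
      have hpt : p = -(3 * t) := by linear_combination hpcase
      rw [hpt] at E2
      have hfac : 2 * c * t * (t + b) = 0 := by linear_combination (1/3 : ℂ) * E2 - E1
      have htb : t = -b := by
        have := (mul_eq_zero.1 hfac).resolve_left
          (mul_ne_zero (mul_ne_zero two_ne_zero hc0) ht0)
        linear_combination this
      rw [htb] at E1
      have h2bc : 2 * b * c - 1 = 0 := by
        have hb12 : b * (2 * b * c - 1) = 0 := by linear_combination E1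
        exact (mul_eq_zero.1 hb12).resolve_left hb0
      rcases mul_eq_zero.1 E5 with hrcase | hrcase
      · have hrt : r = b := by rw [htb] at hrcase; linear_combination hrcase
        rw [hrt] at E3
        have : 2 * b = 0 := by linear_combination E3
        exact hb0 (by linear_combination (1/2 : ℂ) * this)
      · have hrt : r = 4 * b := by rw [htb] at hrcase; linear_combination hrcase
        rw [hrt] at E3
        have h3bc : 3 * b * c - 1 = 0 := by
          have h4b : 4 * b * (3 * b * c - 1) = 0 := by linear_combination E3
          exact (mul_eq_zero.1 h4b).resolve_left
            (mul_ne_zero (by norm_num : (4:ℂ) ≠ 0) hb0)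
        have : (1 : ℂ) = 0 := by linear_combination 2 * h3bc - 3 * h2bc
        exact one_ne_zero this

lemma pres0 {F : ℂ × ℂ → ℂ × ℂ} (h1 : Pres F 1) (h3 : Pres F 3) (h2 : Pres F 2)
    (h4 : Pres F 4) (h8 : Pres F 8) (h10 : Pres F 10) : Pres F 0 := by
  intro x y hxy
  have h00 : (x.1 - y.1) * (x.2 - y.2) = 0 := hxy
  rcases mul_eq_zero.1 h00 with h | h
  · exact pres0_line h1 h3 h2 h4 h8 h10 x y (sub_eq_zero.1 h)
  · have hres := pres0_line (pres_sw h1) (pres_sw h3) (pres_sw h2) (pres_sw h4)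
      (pres_sw h8) (pres_sw h10) (sw x) (sw y) (sub_eq_zero.1 h)
    simp only [Qd, sw] at hres ⊢
    linear_combination hres

lemma nullsplit {F : ℂ × ℂ → ℂ × ℂ} (h0 : Pres F 0) (p q : ℂ × ℂ)
    (h : p.1 = q.1 ∨ p.2 = q.2) : (F p).1 = (F q).1 ∨ (F p).2 = (F q).2 := by
  have hq : Qd p q = 0 := by
    rcases h with h | h
    · show (p.1 - q.1) * (p.2 - q.2) = 0; rw [h, sub_self, zero_mul]
    · show (p.1 - q.1) * (p.2 - q.2) = 0; rw [h, sub_self, mul_zero]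
  have h2 := h0 p q hq
  simp only [Qd] at h2
  rcases mul_eq_zero.1 h2 with h | h
  · exact Or.inl (sub_eq_zero.1 h)
  · exact Or.inr (sub_eq_zero.1 h)

lemma tri2 {a b p : ℂ × ℂ} (h1 : a.1 ≠ b.1) (h2 : a.2 = b.2)
    (hpa : p.1 = a.1 ∨ p.2 = a.2) (hpb : p.1 = b.1 ∨ p.2 = b.2) : p.2 = a.2 := by
  rcases hpa with h | h
  · rcases hpb with h' | h'
    · exact absurd (h.symm.trans h') h1
    · rw [h2]; exact h'
  · exact h

lemma tri1 {a b p : ℂ × ℂ} (h1 : a.2 ≠ b.2) (h2 : a.1 = b.1)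
    (hpa : p.1 = a.1 ∨ p.2 = a.2) (hpb : p.1 = b.1 ∨ p.2 = b.2) : p.1 = a.1 := by
  rcases hpa with h | h
  · exact h
  · rcases hpb with h' | h'
    · rw [h2]; exact h'
    · exact absurd (h.symm.trans h') h1

lemma rows_const1 {F : ℂ × ℂ → ℂ × ℂ} (h1 : Pres F 1) (h0 : Pres F 0) {u0 v1 v2 : ℂ}
    (h12 : (F (u0, v1)).1 ≠ (F (u0, v2)).1) :
    ∀ w x x' : ℂ, (F (x, w)).1 = (F (x', w)).1 := by
  have h22 : (F (u0, v1)).2 = (F (u0, v2)).2 :=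
    (nullsplit h0 (u0, v1) (u0, v2) (Or.inl rfl)).resolve_left h12
  have hc0 : ∀ v : ℂ, (F (u0, v)).2 = (F (u0, v1)).2 := fun v =>
    tri2 h12 h22 (nullsplit h0 (u0, v) (u0, v1) (Or.inl rfl))
      (nullsplit h0 (u0, v) (u0, v2) (Or.inl rfl))
  have hv12 : v1 ≠ v2 := fun h => h12 (by rw [h])
  intro w x x'
  by_contra hne
  have hxx2 : (F (x, w)).2 = (F (x', w)).2 :=
    (nullsplit h0 (x, w) (x', w) (Or.inr rfl)).resolve_left hne
  have hall : ∀ ξ : ℂ, (F (ξ, w)).2 = (F (x, w)).2 := fun ξ =>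
    tri2 hne hxx2 (nullsplit h0 (ξ, w) (x, w) (Or.inr rfl))
      (nullsplit h0 (ξ, w) (x', w) (Or.inr rfl))
  have hxc0 : (F (x, w)).2 = (F (u0, v1)).2 := by
    rw [← hall u0]; exact hc0 w
  obtain ⟨v, hvw, hvc⟩ : ∃ v : ℂ, v ≠ w ∧ (F (u0, v)).2 = (F (u0, v1)).2 := by
    rcases eq_or_ne v1 w with h | h
    · exact ⟨v2, fun h' => hv12 (h.trans h'.symm), hc0 v2⟩
    · exact ⟨v1, h, hc0 v1⟩
  have hq : Qd (u0, v) (u0 - (v - w)⁻¹, w) = 1 := by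
    show (u0 - (u0 - (v - w)⁻¹)) * (v - w) = 1
    have e : (u0 - (u0 - (v - w)⁻¹)) * (v - w) = (v - w) * (v - w)⁻¹ := by ring
    rw [e, mul_inv_cancel₀ (sub_ne_zero.2 hvw)]
  have hd := h1 _ _ hq
  simp only [Qd] at hd
  have h2z : (F (u0, v)).2 - (F (u0 - (v - w)⁻¹, w)).2 = 0 := by
    rw [hvc, hall (u0 - (v - w)⁻¹), hxc0, sub_self]
  rw [h2z, mul_zero] at hd
  exact absurd hd (by norm_num)

lemma vg_to_hg {F : ℂ × ℂ → ℂ × ℂ} (h1 : Pres F 1) (h0 : Pres F 0)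
    (hvg : ∀ u v v' : ℂ, (F (u, v)).1 = (F (u, v')).1) :
    ∀ w x x' : ℂ, (F (x, w)).2 = (F (x', w)).2 := by
  intro w x x'
  by_contra hne
  have hxx1 : (F (x, w)).1 = (F (x', w)).1 :=
    (nullsplit h0 (x, w) (x', w) (Or.inr rfl)).resolve_right hne
  have hall : ∀ ξ : ℂ, (F (ξ, w)).1 = (F (x, w)).1 := fun ξ =>
    tri1 hne hxx1 (nullsplit h0 (ξ, w) (x, w) (Or.inr rfl))
      (nullsplit h0 (ξ, w) (x', w) (Or.inr rfl))
  have hconst : ∀ u v : ℂ, (F (u, v)).1 = (F (x, w)).1 := fun u v =>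
    (hvg u v w).trans (hall u)
  have hq : Qd ((0 : ℂ), (0 : ℂ)) ((1 : ℂ), (1 : ℂ)) = 1 := by
    show ((0 : ℂ) - 1) * ((0 : ℂ) - 1) = 1; ring
  have hd := h1 _ _ hq
  simp only [Qd] at hd
  rw [hconst 0 0, hconst 1 1, sub_self, zero_mul] at hd
  exact absurd hd (by norm_num)

lemma extract (K : ℂ × ℂ → ℂ × ℂ) (hK : Pres K 1)
    (hV : ∀ u v v' : ℂ, (K (u, v)).1 = (K (u, v')).1)
    (hH : ∀ w x x' : ℂ, (K (x, w)).2 = (K (x', w)).2)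
    (h00 : K (0, 0) = (0, 0)) (h11 : K (1, 1) = (1, 1)) :
    ∃ A : ℂ → ℂ, (∀ x y, A (x + y) = A x + A y) ∧ (∀ x y, A (x * y) = A x * A y) ∧
      A 1 = 1 ∧ ∀ u v : ℂ, K (u, v) = (A u, A v) := by
  set A : ℂ → ℂ := fun u => (K (u, 0)).1 with hA
  set B : ℂ → ℂ := fun w => (K (0, w)).2 with hB
  have hKuv : ∀ u v : ℂ, K (u, v) = (A u, B v) := by
    intro u v
    have e1 : (K (u, v)).1 = A u := hV u v 0
    have e2 : (K (u, v)).2 = B v := hH v u 0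
    exact Prod.ext e1 e2
  have hA0 : A 0 = 0 := by show (K (0, 0)).1 = 0; rw [h00]
  have hB0 : B 0 = 0 := by show (K (0, 0)).2 = 0; rw [h00]
  have hA1 : A 1 = 1 := by
    have h := hKuv 1 1; rw [h11] at h
    simp [Prod.ext_iff] at h; exact h.1.symm
  have hU : ∀ u u' v v' : ℂ, (u - u') * (v - v') = 1 → (A u - A u') * (B v - B v') = 1 := by
    intro u u' v v' h
    have hq : Qd (u, v) (u', v') = 1 := by
      show (u - u') * (v - v') = 1; exact h
    have h2 := hK _ _ hq
    simp only [Qd] at h2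
    rw [hKuv u v, hKuv u' v'] at h2
    exact h2
  have hAB1 : ∀ w : ℂ, w ≠ 0 → A w * B w⁻¹ = 1 := by
    intro w hw
    have := hU w 0 w⁻¹ 0 (by rw [sub_zero, sub_zero, mul_inv_cancel₀ hw])
    rw [hA0, hB0, sub_zero, sub_zero] at this; exact this
  have hBA1 : ∀ w : ℂ, w ≠ 0 → A w⁻¹ * B w = 1 := by
    intro w hw
    have := hU w⁻¹ 0 w 0 (by rw [sub_zero, sub_zero, inv_mul_cancel₀ hw])
    rw [hA0, hB0, sub_zero, sub_zero] at this; exact this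
  have hAsub : ∀ u u' : ℂ, A (u - u') = A u - A u' := by
    intro u u'
    rcases eq_or_ne u u' with rfl | h
    · rw [sub_self, hA0, sub_self]
    · have hw : u - u' ≠ 0 := sub_ne_zero.2 h
      have e1 := hU u u' (u - u')⁻¹ 0 (by rw [sub_zero, mul_inv_cancel₀ hw])
      rw [hB0, sub_zero] at e1
      have e2 := hAB1 (u - u') hw
      have hBne : B (u - u')⁻¹ ≠ 0 := by
        intro hz; rw [hz, mul_zero] at e2; exact absurd e2 (by norm_num)
      exact mul_right_cancel₀ hBne (e2.trans e1.symm)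
  have hAadd : ∀ x y : ℂ, A (x + y) = A x + A y := by
    intro x y
    have h := hAsub (x + y) y
    rw [add_sub_cancel_right] at h
    linear_combination -h
  have hBsub : ∀ v v' : ℂ, B (v - v') = B v - B v' := by
    intro v v'
    rcases eq_or_ne v v' with rfl | h
    · rw [sub_self, hB0, sub_self]
    · have hw : v - v' ≠ 0 := sub_ne_zero.2 h
      have e1 := hU (v - v')⁻¹ 0 v v' (by rw [sub_zero, inv_mul_cancel₀ hw])
      rw [hA0, sub_zero] at e1
      have e2 := hBA1 (v - v') hw
      have hAne : A (v - v')⁻¹ ≠ 0 := by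
        intro hz; rw [hz, zero_mul] at e2; exact absurd e2 (by norm_num)
      exact mul_left_cancel₀ hAne (e2.trans e1.symm)
  have hAsq : ∀ x : ℂ, A (x ^ 2) = (A x) ^ 2 := by
    intro x
    rcases eq_or_ne x 0 with rfl | hx0
    · rw [show ((0 : ℂ) ^ 2) = 0 by ring, hA0]; ring
    rcases eq_or_ne x 1 with rfl | hx1
    · rw [show ((1 : ℂ) ^ 2) = 1 by ring, hA1]; ring
    have hx1' : x - 1 ≠ 0 := sub_ne_zero.2 hx1
    have hxx : x ^ 2 - x ≠ 0 := by
      rw [show x ^ 2 - x = x * (x - 1) by ring]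
      exact mul_ne_zero hx0 hx1'
    have e1 := hAB1 _ hxx
    have e2 := hAB1 _ hx1'
    have e3 := hAB1 _ hx0
    have hinv : (x ^ 2 - x)⁻¹ = (x - 1)⁻¹ - x⁻¹ := by
      field_simp
      ring
    rw [hinv, hBsub] at e1
    rw [hAsub, hA1] at e2
    have hAsx : A (x ^ 2 - x) = A (x ^ 2) - A x := hAsub _ _
    rw [hAsx] at e1
    have hβγ : ((A x) ^ 2 - A x) * (B (x - 1)⁻¹ - B x⁻¹) = 1 := by
      linear_combination (A x) * e2 - (A x - 1) * e3
    have hne2 : B (x - 1)⁻¹ - B x⁻¹ ≠ 0 := by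
      intro hz; rw [hz, mul_zero] at hβγ; exact absurd hβγ (by norm_num)
    have h5 := mul_right_cancel₀ hne2 (e1.trans hβγ.symm)
    linear_combination h5
  have hAmul : ∀ x y : ℂ, A (x * y) = A x * A y := by
    intro x y
    have h1' := hAsq (x + y)
    have h2' : A ((x + y) ^ 2) = A (x ^ 2) + 2 * A (x * y) + A (y ^ 2) := by
      rw [show (x + y) ^ 2 = x ^ 2 + (x * y + (x * y + y ^ 2)) by ring, hAadd, hAadd, hAadd]
      ring
    rw [h2', hAsq x, hAsq y, hAadd x y] at h1'
    linear_combination (1 / 2 : ℂ) * h1'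
  have hBA : ∀ v : ℂ, B v = A v := by
    intro v
    rcases eq_or_ne v 0 with rfl | hv
    · rw [hA0, hB0]
    have e1 := hBA1 v hv
    have e2 : A v⁻¹ * A v = 1 := by
      rw [← hAmul, inv_mul_cancel₀ hv, hA1]
    have hAne : A v⁻¹ ≠ 0 := by
      intro hz; rw [hz, zero_mul] at e2; exact absurd e2 (by norm_num)
    exact mul_left_cancel₀ hAne (e1.trans e2.symm)
  refine ⟨A, hAadd, hAmul, hA1, fun u v => ?_⟩
  rw [hKuv u v, hBA v]

lemma main (F : ℂ × ℂ → ℂ × ℂ) (h1 : Pres F 1) (h00 : F (0, 0) = (0, 0))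
    (h11 : F (1, 1) = (1, 1)) :
    ∃ A : ℂ → ℂ, (∀ x y, A (x + y) = A x + A y) ∧ (∀ x y, A (x * y) = A x * A y) ∧
      A 1 = 1 ∧
      ((∀ u v : ℂ, F (u, v) = (A u, A v)) ∨ (∀ u v : ℂ, F (u, v) = (A v, A u))) := by
  have h3 := pres3 h1
  have h9 : Pres F 9 := Pres_congr (by norm_num)
    (presR h1 h3 3 3 h3 h3 (by norm_num) (by norm_num) (by norm_num))
  have h11p : Pres F 11 := Pres_congr (by norm_num)
    (presR h1 h3 3 1 h3 h1 (by norm_num) (by norm_num) (by norm_num))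
  have h4 := pres4 h1 h3
  have h41 : Pres F (4 * 1) := Pres_congr (by norm_num) h4
  have h2 : Pres F 2 := Pres_congr (by norm_num)
    (presR2 h1 h3 3 1 h3 h1 h41 (by norm_num) (by norm_num) (by norm_num))
  have h8 : Pres F 8 := Pres_congr (by norm_num)
    (presR2 h1 h3 9 1 h9 h1 h41 (by norm_num) (by norm_num) (by norm_num))
  have h10 : Pres F 10 := Pres_congr (by norm_num)
    (presR2 h1 h3 11 1 h11p h1 h41 (by norm_num) (by norm_num) (by norm_num))
  have h0 := pres0 h1 h3 h2 h4 h8 h10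
  by_cases hvg : ∀ u v v' : ℂ, (F (u, v)).1 = (F (u, v')).1
  · have hhg := vg_to_hg h1 h0 hvg
    obtain ⟨A, ha, hm, h1a, hk⟩ := extract F h1 hvg hhg h00 h11
    exact ⟨A, ha, hm, h1a, Or.inl hk⟩
  · push_neg at hvg
    obtain ⟨u0, v1, v2, h12⟩ := hvg
    have hrows := rows_const1 h1 h0 h12
    have hH1 : Pres (fun p => sw (F p)) 1 := by
      intro p q hpq
      have h' := h1 p q hpq
      simp only [Qd, sw] at h' ⊢
      linear_combination h'
    have hH0 : Pres (fun p => sw (F p)) 0 := by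
      intro p q hpq
      have h' := h0 p q hpq
      simp only [Qd, sw] at h' ⊢
      linear_combination h'
    have hH00 : sw (F (0, 0)) = (0, 0) := by rw [h00]; rfl
    have hH11 : sw (F (1, 1)) = (1, 1) := by rw [h11]; rfl
    have hvgH : ∀ u v v' : ℂ, (sw (F (u, v))).1 = (sw (F (u, v'))).1 := by
      intro u v v'
      show (F (u, v)).2 = (F (u, v')).2
      by_contra hne
      have h1e : (F (u, v)).1 = (F (u, v')).1 :=
        (nullsplit h0 (u, v) (u, v') (Or.inl rfl)).resolve_right hne
      have hc1 : (F (u, v1)).1 = (F (u, v)).1 :=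
        tri1 hne h1e (nullsplit h0 (u, v1) (u, v) (Or.inl rfl))
          (nullsplit h0 (u, v1) (u, v') (Or.inl rfl))
      have hc2 : (F (u, v2)).1 = (F (u, v)).1 :=
        tri1 hne h1e (nullsplit h0 (u, v2) (u, v) (Or.inl rfl))
          (nullsplit h0 (u, v2) (u, v') (Or.inl rfl))
      apply h12
      rw [hrows v1 u0 u, hrows v2 u0 u, hc1, hc2]
    have hhgH := vg_to_hg hH1 hH0 hvgH
    obtain ⟨A, ha, hm, h1a, hk⟩ := extract _ hH1 hvgH hhgH hH00 hH11
    refine ⟨A, ha, hm, h1a, Or.inr fun u v => ?_⟩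
    have h5 := hk u v
    have h6 : F (u, v) = sw (A u, A v) := by
      rw [← h5]; rfl
    rw [h6]; rfl

end BQThm
end

/-- Theorem 2: a unit-distance preserving map `f : ℂ² → ℂ²` fixing `(0,0)`, `(1,0)`, `(0,1)`
is of the form `(γ, γ)` for a field homomorphism `γ : ℂ → ℂ`. -/
theorem stmt_1 (f : ℂ × ℂ → ℂ × ℂ)
    (hf : ∀ X Y : ℂ × ℂ, (X.1 - Y.1) ^ 2 + (X.2 - Y.2) ^ 2 = 1 →
      ((f X).1 - (f Y).1) ^ 2 + ((f X).2 - (f Y).2) ^ 2 = 1)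
    (h00 : f (0, 0) = (0, 0)) (h10 : f (1, 0) = (1, 0)) (h01 : f (0, 1) = (0, 1)) :
    ∃ γ : ℂ →+* ℂ, ∀ x₁ x₂ : ℂ, f (x₁, x₂) = (γ x₁, γ x₂) := by
  classical
  set Em : ℂ × ℂ → ℂ × ℂ := fun X => (X.1 + Complex.I * X.2, X.1 - Complex.I * X.2) with hEm
  set Ei : ℂ × ℂ → ℂ × ℂ :=
    fun Y => ((Y.1 + Y.2) / 2, (Y.1 - Y.2) / (2 * Complex.I)) with hEi
  have hIne : (2 : ℂ) * Complex.I ≠ 0 := mul_ne_zero two_ne_zero Complex.I_ne_zero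
  have hEiEm : ∀ X : ℂ × ℂ, Ei (Em X) = X := by
    intro X
    apply Prod.ext
    · show (X.1 + Complex.I * X.2 + (X.1 - Complex.I * X.2)) / 2 = X.1
      ring
    · show (X.1 + Complex.I * X.2 - (X.1 - Complex.I * X.2)) / (2 * Complex.I) = X.2
      rw [show X.1 + Complex.I * X.2 - (X.1 - Complex.I * X.2) = X.2 * (2 * Complex.I) by ring]
      exact mul_div_cancel_right₀ X.2 hIne
  have hEmEi : ∀ Y : ℂ × ℂ, Em (Ei Y) = Y := by
    intro Y
    apply Prod.ext
    · show (Y.1 + Y.2) / 2 + Complex.I * ((Y.1 - Y.2) / (2 * Complex.I)) = Y.1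
      field_simp
      ring
    · show (Y.1 + Y.2) / 2 - Complex.I * ((Y.1 - Y.2) / (2 * Complex.I)) = Y.2
      field_simp
      ring
  have hQEm : ∀ X Y : ℂ × ℂ,
      BQThm.Qd (Em X) (Em Y) = (X.1 - Y.1) ^ 2 + (X.2 - Y.2) ^ 2 := by
    intro X Y
    show (X.1 + Complex.I * X.2 - (Y.1 + Complex.I * Y.2)) *
      (X.1 - Complex.I * X.2 - (Y.1 - Complex.I * Y.2)) = (X.1 - Y.1) ^ 2 + (X.2 - Y.2) ^ 2
    linear_combination (-(X.2 - Y.2) ^ 2) * Complex.I_sq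
  set F : ℂ × ℂ → ℂ × ℂ := fun p => Em (f (Ei p)) with hF
  have hF1 : BQThm.Pres F 1 := by
    intro p q hpq
    have hpq' : ((Ei p).1 - (Ei q).1) ^ 2 + ((Ei p).2 - (Ei q).2) ^ 2 = 1 := by
      rw [← hQEm (Ei p) (Ei q), hEmEi, hEmEi]
      exact hpq
    have h5 := hf _ _ hpq'
    show BQThm.Qd (Em (f (Ei p))) (Em (f (Ei q))) = 1
    rw [hQEm]
    exact h5
  have hEi00 : Ei (0, 0) = ((0 : ℂ), (0 : ℂ)) := by
    apply Prod.ext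
    · show ((0 : ℂ) + 0) / 2 = 0; norm_num
    · show ((0 : ℂ) - 0) / (2 * Complex.I) = 0; simp
  have hEi11 : Ei (1, 1) = ((1 : ℂ), (0 : ℂ)) := by
    apply Prod.ext
    · show ((1 : ℂ) + 1) / 2 = 1; norm_num
    · show ((1 : ℂ) - 1) / (2 * Complex.I) = 0; simp
  have hEiI : Ei (Complex.I, -Complex.I) = ((0 : ℂ), (1 : ℂ)) := by
    apply Prod.ext
    · show (Complex.I + -Complex.I) / 2 = 0; simp
    · show (Complex.I - -Complex.I) / (2 * Complex.I) = 1
      rw [show Complex.I - -Complex.I = 2 * Complex.I by ring]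
      exact div_self hIne
  have hF00 : F (0, 0) = (0, 0) := by
    show Em (f (Ei (0, 0))) = (0, 0)
    rw [hEi00, h00]
    show ((0 : ℂ) + Complex.I * 0, (0 : ℂ) - Complex.I * 0) = (0, 0)
    simp
  have hF11 : F (1, 1) = (1, 1) := by
    show Em (f (Ei (1, 1))) = (1, 1)
    rw [hEi11, h10]
    show ((1 : ℂ) + Complex.I * 0, (1 : ℂ) - Complex.I * 0) = (1, 1)
    simp
  have hFi : F (Complex.I, -Complex.I) = (Complex.I, -Complex.I) := by
    show Em (f (Ei (Complex.I, -Complex.I))) = (Complex.I, -Complex.I)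
    rw [hEiI, h01]
    show ((0 : ℂ) + Complex.I * 1, (0 : ℂ) - Complex.I * 1) = (Complex.I, -Complex.I)
    simp
  obtain ⟨A, hadd, hmul, hone, hcase⟩ := BQThm.main F hF1 hF00 hF11
  have hA0 : A 0 = 0 := by
    have h := hadd 0 0
    rw [add_zero] at h
    linear_combination -h
  have hneg : ∀ z : ℂ, A (-z) = -A z := by
    intro z
    have h := hadd z (-z)
    rw [add_neg_cancel, hA0] at h
    linear_combination -h
  let γ : ℂ →+* ℂ :=
    { toFun := A
      map_one' := hone
      map_mul' := hmul
      map_zero' := hA0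
      map_add' := hadd }
  refine ⟨γ, ?_⟩
  intro x1 x2
  have hfX : f (x1, x2) = Ei (F (Em (x1, x2))) := by
    show f (x1, x2) = Ei (Em (f (Ei (Em (x1, x2)))))
    rw [hEiEm, hEiEm]
  rcases hcase with hk | hk
  · have hAI : A Complex.I = Complex.I := by
      have h5 := hk Complex.I (-Complex.I)
      rw [hFi] at h5
      simp [Prod.ext_iff] at h5
      exact h5.1.symm
    have hEmval : F (Em (x1, x2)) = Em (A x1, A x2) := by
      rw [show Em (x1, x2) = (x1 + Complex.I * x2, x1 - Complex.I * x2) from rfl, hk]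
      apply Prod.ext
      · show A (x1 + Complex.I * x2) = A x1 + Complex.I * A x2
        rw [hadd, hmul, hAI]
      · show A (x1 - Complex.I * x2) = A x1 - Complex.I * A x2
        rw [sub_eq_add_neg, hadd, ← neg_mul, hmul, hneg, hAI, neg_mul, ← sub_eq_add_neg]
    rw [hfX, hEmval, hEiEm]
    rfl
  · have hAI : A Complex.I = -Complex.I := by
      have h5 := hk Complex.I (-Complex.I)
      rw [hFi] at h5
      simp [Prod.ext_iff] at h5
      exact h5.2.symm
    have hEmval : F (Em (x1, x2)) = Em (A x1, A x2) := by
      rw [show Em (x1, x2) = (x1 + Complex.I * x2, x1 - Complex.I * x2) from rfl, hk]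
      apply Prod.ext
      · show A (x1 - Complex.I * x2) = A x1 + Complex.I * A x2
        rw [sub_eq_add_neg, hadd, ← neg_mul, hmul, hneg, hAI]
        ring
      · show A (x1 + Complex.I * x2) = A x1 - Complex.I * A x2
        rw [hadd, hmul, hAI]
        ring
    rw [hfX, hEmval, hEiEm]
    rfl
end

section
/- Let f : ℂ² → ℂ² preserve unit distance, with f((0,0)) = (0,0), f((1,0)) = (1,0), f((0,1)) = (0,1), and let ρ : ℝ → ℂ be a field homomorphism such that for all x₁, x₂ ∈ ℂ, f((x₁,x₂)) equals (ρ(Re x₁)+ρ(Im x₁)·i, ρ(Re x₂)+ρ(Im x₂)·i) or (ρ(Re x₁)−ρ(Im x₁)·i, ρ(Re x₂)−ρ(Im x₂)·i). Define A = {(x₁,x₂) ∈ ℂ² : f((x₁,x₂)) = (ρ(Re x₁)+ρ(Im x₁)·i, ρ(Re x₂)+ρ(Im x₂)·i)} and B = {(x₁,x₂) ∈ ℂ² : f((x₁,x₂)) = (ρ(Re x₁)−ρ(Im x₁)·i, ρ(Re x₂)−ρ(Im x₂)·i)}. If X = (x₁,x₂), Y = (y₁,y₂) ∈ ℂ² satisfy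 φ(X,Y) ∈ ℚ and ψ(X,Y) ≠ 0, then Y ∈ A implies X ∈ A, and Y ∈ B implies X ∈ B. -/
open Complex


lemma sq_sum_zero {a b : ℝ} (h : a^2 + b^2 = 0) : a = 0 ∧ b = 0 := by
  constructor <;> nlinarith [sq_nonneg a, sq_nonneg b]

lemma pick (m₁ m₂ n₁ n₂ t : ℝ) (ht : t ≠ 0)
    (hψ : m₁*n₁ + m₂*n₂ ≠ 0) (hmn : ¬(m₁ = -n₁ ∧ m₂ = -n₂)) :
    ∃ s : ℝ, s^2 = 1 ∧
      (m₁*(m₁+n₁) + m₂*(m₂+n₂))/2 + s*(t*(m₁*n₂ - m₂*n₁)) ≠ 0 ∧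
      (n₁*(m₁+n₁) + n₂*(m₂+n₂))/2 + s*(t*(m₁*n₂ - m₂*n₁)) ≠ 0 := by
  have hsum : 0 < (m₁*(m₁+n₁) + m₂*(m₂+n₂))/2 + (n₁*(m₁+n₁) + n₂*(m₂+n₂))/2 := by
    have h1 : (m₁*(m₁+n₁) + m₂*(m₂+n₂))/2 + (n₁*(m₁+n₁) + n₂*(m₂+n₂))/2
        = ((m₁+n₁)^2 + (m₂+n₂)^2)/2 := by ring
    rw [h1]
    rcases not_and_or.mp hmn with h | h
    · have : m₁ + n₁ ≠ 0 := fun hc => h (by linarith)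
      positivity
    · have : m₂ + n₂ ≠ 0 := fun hc => h (by linarith)
      positivity
  by_cases hγ : m₁*n₂ - m₂*n₁ = 0
  · refine ⟨1, by norm_num, ?_, ?_⟩ <;> rw [hγ] <;> intro hc
    · -- α = 0 case
      have h2 : m₁*n₁ + m₂*n₂ = -(m₁^2 + m₂^2) := by linear_combination 2*hc
      have hM0 : m₁^2 + m₂^2 ≠ 0 := by
        intro h0; exact hψ (by rw [h2, h0]; ring)
      have key : (m₁^2+m₂^2) * ((n₁^2+n₂^2) - (m₁^2+m₂^2)) = 0 := by
        linear_combination (m₁*n₁ + m₂*n₂ - (m₁^2+m₂^2))*h2 + (m₁*n₂ - m₂*n₁)*hγ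
      have hN : n₁^2+n₂^2 = m₁^2+m₂^2 := by
        rcases mul_eq_zero.mp key with h | h
        · exact absurd h hM0
        · linarith
      have final : (m₁+n₁)^2 + (m₂+n₂)^2 = 0 := by linear_combination 2*h2 + hN
      obtain ⟨e1, e2⟩ := sq_sum_zero final
      exact hmn ⟨by linarith, by linarith⟩
    · have h2 : m₁*n₁ + m₂*n₂ = -(n₁^2 + n₂^2) := by linear_combination 2*hc
      have hN0 : n₁^2 + n₂^2 ≠ 0 := by
        intro h0; exact hψ (by rw [h2, h0]; ring)
      have key : (n₁^2+n₂^2) * ((m₁^2+m₂^2) - (n₁^2+n₂^2)) = 0 := by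
        linear_combination (m₁*n₁ + m₂*n₂ - (n₁^2+n₂^2))*h2 + (m₁*n₂ - m₂*n₁)*hγ
      have hM : m₁^2+m₂^2 = n₁^2+n₂^2 := by
        rcases mul_eq_zero.mp key with h | h
        · exact absurd h hN0
        · linarith
      have final : (m₁+n₁)^2 + (m₂+n₂)^2 = 0 := by linear_combination 2*h2 + hM
      obtain ⟨e1, e2⟩ := sq_sum_zero final
      exact hmn ⟨by linarith, by linarith⟩
  · by_cases h1 : (m₁*(m₁+n₁) + m₂*(m₂+n₂))/2 + 1*(t*(m₁*n₂ - m₂*n₁)) ≠ 0 ∧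
        (n₁*(m₁+n₁) + n₂*(m₂+n₂))/2 + 1*(t*(m₁*n₂ - m₂*n₁)) ≠ 0
    · exact ⟨1, by norm_num, h1.1, h1.2⟩
    · have hβ : t*(m₁*n₂ - m₂*n₁) ≠ 0 := mul_ne_zero ht hγ
      refine ⟨-1, by norm_num, ?_, ?_⟩
      · rcases not_and_or.mp h1 with h | h
        · push_neg at h
          intro hc; apply hβ; linarith [hc, h]
        · push_neg at h
          intro hc; linarith [hc, h, hsum]
      · rcases not_and_or.mp h1 with h | h
        · push_neg at h
          intro hc; linarith [hc, h, hsum]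
        · push_neg at h
          intro hc; apply hβ; linarith [hc, h]





lemma core (u₁ u₂ v₁ v₂ : ℂ)
    (him : ((u₁-v₁)^2 + (u₂-v₂)^2).im = 0)
    (h0 : 0 < ((u₁-v₁)^2 + (u₂-v₂)^2).re)
    (h4 : ((u₁-v₁)^2 + (u₂-v₂)^2).re < 4)
    (hψ : u₁.im*v₁.im + u₂.im*v₂.im ≠ 0)
    (hmn : ¬(u₁.im = -v₁.im ∧ u₂.im = -v₂.im)) :
    ∃ z₁ z₂ : ℂ, (u₁-z₁)^2+(u₂-z₂)^2 = 1 ∧ (v₁-z₁)^2+(v₂-z₂)^2 = 1 ∧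
      u₁.im*z₁.im + u₂.im*z₂.im ≠ 0 ∧ v₁.im*z₁.im + v₂.im*z₂.im ≠ 0 := by
  set q : ℝ := ((u₁-v₁)^2 + (u₂-v₂)^2).re with hq
  have hqC : (u₁-v₁)^2 + (u₂-v₂)^2 = (q:ℂ) := by
    apply Complex.ext
    · rw [Complex.ofReal_re]
    · simpa using him
  have hfrac : 0 < (4-q)/(4*q) := by
    apply div_pos <;> linarith
  set t₀ : ℝ := Real.sqrt ((4-q)/(4*q)) with ht₀def
  have ht₀sq : t₀^2 = (4-q)/(4*q) := Real.sq_sqrt hfrac.le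
  have ht₀ : t₀ ≠ 0 := by
    intro h; rw [h] at ht₀sq; simp at ht₀sq; nlinarith [ht₀sq, hfrac]
  obtain ⟨s, hs2, hA, hB⟩ := pick u₁.im u₂.im v₁.im v₂.im t₀ ht₀ hψ hmn
  set c : ℝ := s * t₀ with hcdef
  have hc2 : c^2 = (4-q)/(4*q) := by rw [hcdef, mul_pow, hs2, one_mul, ht₀sq]
  refine ⟨((1/2:ℝ):ℂ) * (u₁+v₁) + (c:ℂ) * (v₂-u₂),
          ((1/2:ℝ):ℂ) * (u₂+v₂) + (c:ℂ) * (u₁-v₁), ?_, ?_, ?_, ?_⟩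
  · -- φ(U,Z) = 1
    have hcC : (c:ℂ)^2 = ((4:ℂ)-(q:ℂ))/(4*(q:ℂ)) := by
      rw [← ofReal_pow, hc2]; push_cast; ring
    have hq0 : (q:ℂ) ≠ 0 := by
      simp only [ne_eq, ofReal_eq_zero]; intro h; rw [h] at h0; exact lt_irrefl 0 h0
    field_simp at hcC
    push_cast
    linear_combination (1/4 + (c:ℂ)^2) * hqC + ((1:ℂ)/(4)) * hcC
  · have hcC : (c:ℂ)^2 = ((4:ℂ)-(q:ℂ))/(4*(q:ℂ)) := by
      rw [← ofReal_pow, hc2]; push_cast; ring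
    have hq0 : (q:ℂ) ≠ 0 := by
      simp only [ne_eq, ofReal_eq_zero]; intro h; rw [h] at h0; exact lt_irrefl 0 h0
    field_simp at hcC
    push_cast
    linear_combination (1/4 + (c:ℂ)^2) * hqC + ((1:ℂ)/(4)) * hcC
  · intro h; apply hA
    simp only [Complex.add_im, Complex.mul_im, Complex.ofReal_re, Complex.ofReal_im,
      Complex.add_re, Complex.sub_im, Complex.sub_re] at h
    linear_combination h
  · intro h; apply hB
    simp only [Complex.add_im, Complex.mul_im, Complex.ofReal_re, Complex.ofReal_im,
      Complex.add_re, Complex.sub_im, Complex.sub_re] at h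
    linear_combination h



lemma line_of (u₁ u₂ z₁ z₂ : ℂ)
    (E1 : (u₁-z₁)^2 + (u₂-z₂)^2 = 1)
    (E2 : ((starRingEnd ℂ) u₁ - z₁)^2 + ((starRingEnd ℂ) u₂ - z₂)^2 = 1) :
    u₁.im*z₁.im + u₂.im*z₂.im = 0 := by
  have hD := congrArg Complex.re (E1.trans E2.symm)
  simp only [Complex.add_re, Complex.sub_re, Complex.sub_im, pow_two, Complex.mul_re,
    Complex.mul_im, Complex.conj_re, Complex.conj_im, Complex.add_im] at hD
  linear_combination hD / 4



noncomputable def sig (ρ : ℝ →+* ℂ) : ℂ →+* ℂ where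
  toFun z := ρ z.re + ρ z.im * I
  map_one' := by simp
  map_zero' := by simp
  map_add' z w := by
    simp only [add_re, add_im, map_add]; ring
  map_mul' z w := by
    simp only [mul_re, mul_im, map_sub, map_add, map_mul]
    linear_combination (-(ρ z.im * ρ w.im)) * Complex.I_sq

lemma sig_apply (ρ : ℝ →+* ℂ) (z : ℂ) : sig ρ z = ρ z.re + ρ z.im * I := rfl

lemma sig_conj (ρ : ℝ →+* ℂ) (z : ℂ) :
    sig ρ ((starRingEnd ℂ) z) = ρ z.re - ρ z.im * I := by
  simp [sig_apply, map_neg, sub_eq_add_neg, neg_mul]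

lemma sig_inj (ρ : ℝ →+* ℂ) : Function.Injective (sig ρ) :=
  RingHom.injective _





lemma E2_of (ρ : ℝ →+* ℂ) (u₁ u₂ z₁ z₂ : ℂ)
    (h : ((ρ u₁.re - ρ u₁.im * I) - (ρ z₁.re + ρ z₁.im * I))^2
       + ((ρ u₂.re - ρ u₂.im * I) - (ρ z₂.re + ρ z₂.im * I))^2 = 1) :
    ((starRingEnd ℂ) u₁ - z₁)^2 + ((starRingEnd ℂ) u₂ - z₂)^2 = 1 := by
  apply sig_inj ρ
  rw [map_add, map_pow, map_pow, map_sub, map_sub, sig_conj, sig_conj,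
    sig_apply, sig_apply, map_one]
  linear_combination h

lemma E2_of' (ρ : ℝ →+* ℂ) (u₁ u₂ z₁ z₂ : ℂ)
    (h : ((ρ u₁.re + ρ u₁.im * I) - (ρ z₁.re - ρ z₁.im * I))^2
       + ((ρ u₂.re + ρ u₂.im * I) - (ρ z₂.re - ρ z₂.im * I))^2 = 1) :
    ((starRingEnd ℂ) u₁ - z₁)^2 + ((starRingEnd ℂ) u₂ - z₂)^2 = 1 := by
  have h' : (u₁ - (starRingEnd ℂ) z₁)^2 + (u₂ - (starRingEnd ℂ) z₂)^2 = 1 := by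
    apply sig_inj ρ
    rw [map_add, map_pow, map_pow, map_sub, map_sub, sig_conj, sig_conj,
      sig_apply, sig_apply, map_one]
    linear_combination h
  have h2 := congrArg (starRingEnd ℂ) h'
  simpa [map_add, map_pow, map_sub, Complex.conj_conj] using h2

def plusF (ρ : ℝ →+* ℂ) (P : ℂ × ℂ) : ℂ × ℂ :=
  (ρ P.1.re + ρ P.1.im * I, ρ P.2.re + ρ P.2.im * I)

def minusF (ρ : ℝ →+* ℂ) (P : ℂ × ℂ) : ℂ × ℂ :=
  (ρ P.1.re - ρ P.1.im * I, ρ P.2.re - ρ P.2.im * I)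

def Good (f : ℂ × ℂ → ℂ × ℂ) (ρ : ℝ →+* ℂ) (U V : ℂ × ℂ) : Prop :=
  (f V = plusF ρ V → f U = plusF ρ U) ∧ (f V = minusF ρ V → f U = minusF ρ U)

lemma OS (f : ℂ × ℂ → ℂ × ℂ)
    (hf : ∀ X Y : ℂ × ℂ, (X.1 - Y.1) ^ 2 + (X.2 - Y.2) ^ 2 = 1 →
      ((f X).1 - (f Y).1) ^ 2 + ((f X).2 - (f Y).2) ^ 2 = 1)
    (ρ : ℝ →+* ℂ)
    (hρ : ∀ x₁ x₂ : ℂ,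
      f (x₁, x₂) = (ρ x₁.re + ρ x₁.im * Complex.I, ρ x₂.re + ρ x₂.im * Complex.I) ∨
      f (x₁, x₂) = (ρ x₁.re - ρ x₁.im * Complex.I, ρ x₂.re - ρ x₂.im * Complex.I))
    (u₁ u₂ v₁ v₂ : ℂ)
    (him : ((u₁-v₁)^2 + (u₂-v₂)^2).im = 0)
    (h0 : 0 < ((u₁-v₁)^2 + (u₂-v₂)^2).re)
    (h4 : ((u₁-v₁)^2 + (u₂-v₂)^2).re < 4)
    (hψ : u₁.im*v₁.im + u₂.im*v₂.im ≠ 0)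
    (hmn : ¬(u₁.im = -v₁.im ∧ u₂.im = -v₂.im)) :
    Good f ρ (u₁, u₂) (v₁, v₂) := by
  obtain ⟨z₁, z₂, hUZ, hVZ, hMZ, hNZ⟩ := core u₁ u₂ v₁ v₂ him h0 h4 hψ hmn
  have hfUZ := hf (u₁,u₂) (z₁,z₂) hUZ
  have hfVZ := hf (v₁,v₂) (z₁,z₂) hVZ
  constructor
  · intro hV
    rcases hρ u₁ u₂ with hU | hU
    · exact hU
    · exfalso
      rcases hρ z₁ z₂ with hZ | hZ
      · rw [hU, hZ] at hfUZ
        exact hMZ (line_of u₁ u₂ z₁ z₂ hUZ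
          (E2_of ρ u₁ u₂ z₁ z₂ (by linear_combination hfUZ)))
      · rw [hV, hZ] at hfVZ
        simp only [plusF, minusF] at hfVZ
        exact hNZ (line_of v₁ v₂ z₁ z₂ hVZ
          (E2_of' ρ v₁ v₂ z₁ z₂ (by linear_combination hfVZ)))
  · intro hV
    rcases hρ u₁ u₂ with hU | hU
    · exfalso
      rcases hρ z₁ z₂ with hZ | hZ
      · rw [hV, hZ] at hfVZ
        simp only [plusF, minusF] at hfVZ
        exact hNZ (line_of v₁ v₂ z₁ z₂ hVZ
          (E2_of ρ v₁ v₂ z₁ z₂ (by linear_combination hfVZ)))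
      · rw [hU, hZ] at hfUZ
        exact hMZ (line_of u₁ u₂ z₁ z₂ hUZ
          (E2_of' ρ u₁ u₂ z₁ z₂ (by linear_combination hfUZ)))
    · exact hU






lemma Good.trans {f ρ U V W} (h1 : Good f ρ U V) (h2 : Good f ρ V W) :
    Good f ρ U W := ⟨fun h => h1.1 (h2.1 h), fun h => h1.2 (h2.2 h)⟩

lemma Good.rfl {f ρ U} : Good f ρ U U := ⟨id, id⟩





noncomputable def pt (r p : ℝ) : ℂ := (r:ℂ) + (p:ℂ)*I

@[simp] lemma pt_re (r p : ℝ) : (pt r p).re = r := by simp [pt]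
@[simp] lemma pt_im (r p : ℝ) : (pt r p).im = p := by simp [pt]

section walkstuff

variable (f : ℂ × ℂ → ℂ × ℂ)
    (hf : ∀ X Y : ℂ × ℂ, (X.1 - Y.1) ^ 2 + (X.2 - Y.2) ^ 2 = 1 →
      ((f X).1 - (f Y).1) ^ 2 + ((f X).2 - (f Y).2) ^ 2 = 1)
    (ρ : ℝ →+* ℂ)
    (hρ : ∀ x₁ x₂ : ℂ,
      f (x₁, x₂) = (ρ x₁.re + ρ x₁.im * Complex.I, ρ x₂.re + ρ x₂.im * Complex.I) ∨
      f (x₁, x₂) = (ρ x₁.re - ρ x₁.im * Complex.I, ρ x₂.re - ρ x₂.im * Complex.I))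

include hf hρ in
lemma hopP (p₁ p₂ : ℝ) (hp : ¬(p₁ = 0 ∧ p₂ = 0)) (r₁ r₂ r₁' r₂' : ℝ)
    (hd : 0 < (r₁-r₁')^2 + (r₂-r₂')^2) (hd4 : (r₁-r₁')^2 + (r₂-r₂')^2 < 4) :
    Good f ρ (pt r₁ p₁, pt r₂ p₂) (pt r₁' p₁, pt r₂' p₂) := by
  have key : (pt r₁ p₁ - pt r₁' p₁)^2 + (pt r₂ p₂ - pt r₂' p₂)^2
      = (((r₁-r₁')^2 + (r₂-r₂')^2 : ℝ) : ℂ) := by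
    simp only [pt]; push_cast; ring
  apply OS f hf ρ hρ
  · rw [key, Complex.ofReal_im]
  · rw [key, Complex.ofReal_re]; exact hd
  · rw [key, Complex.ofReal_re]; exact hd4
  · simp only [pt_im]
    intro h; apply hp
    constructor <;> nlinarith [h]
  · simp only [pt_im]
    intro h; apply hp
    exact ⟨by linarith [h.1], by linarith [h.2]⟩

include hf hρ in
lemma walk (p₁ p₂ : ℝ) (hp : ¬(p₁ = 0 ∧ p₂ = 0)) :
    ∀ k : ℕ, ∀ r₁ r₂ r₁' r₂' : ℝ, (r₁-r₁')^2 + (r₂-r₂')^2 ≤ ((k:ℝ)+1)^2 →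
    Good f ρ (pt r₁ p₁, pt r₂ p₂) (pt r₁' p₁, pt r₂' p₂) := by
  intro k
  induction k with
  | zero =>
    intro r₁ r₂ r₁' r₂' hle
    by_cases heq : r₁ = r₁' ∧ r₂ = r₂'
    · rw [heq.1, heq.2]; exact Good.rfl
    · have hd : 0 < (r₁-r₁')^2 + (r₂-r₂')^2 := by
        rcases not_and_or.mp heq with h | h
        · have : r₁ - r₁' ≠ 0 := fun hc => h (by linarith)
          positivity
        · have : r₂ - r₂' ≠ 0 := fun hc => h (by linarith)
          positivity
      exact hopP f hf ρ hρ p₁ p₂ hp r₁ r₂ r₁' r₂' hd (by norm_num at hle; linarith)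
  | succ k ih =>
    intro r₁ r₂ r₁' r₂' hle
    by_cases hsmall : (r₁-r₁')^2 + (r₂-r₂')^2 ≤ ((k:ℝ)+1)^2
    · exact ih r₁ r₂ r₁' r₂' hsmall
    · push_neg at hsmall
      have hk1 : (0:ℝ) < ((k:ℝ)+1)^2 := by positivity
      have hd : 0 < (r₁-r₁')^2 + (r₂-r₂')^2 := lt_trans hk1 hsmall
      set D := (r₁-r₁')^2 + (r₂-r₂')^2 with hD
      set L := Real.sqrt D with hLdef
      have hL2 : L^2 = D := Real.sq_sqrt hd.le
      have hLpos : 0 < L := Real.sqrt_pos.mpr hd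
      have hLne : L ≠ 0 := ne_of_gt hLpos
      have hLgt : (k:ℝ)+1 < L := by
        nlinarith [hL2, hsmall, hLpos]
      have hLle : L ≤ (k:ℝ)+2 := by
        push_cast at hle
        nlinarith [hL2, hle, hLpos]
      -- intermediate point
      set s₁ := r₁ + (r₁' - r₁)/L with hs₁
      set s₂ := r₂ + (r₂' - r₂)/L with hs₂
      have step1 : Good f ρ (pt r₁ p₁, pt r₂ p₂) (pt s₁ p₁, pt s₂ p₂) := by
        apply hopP f hf ρ hρ p₁ p₂ hp
        · have : (r₁-s₁)^2 + (r₂-s₂)^2 = D/L^2 := by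
            rw [hs₁, hs₂]; field_simp; linear_combination -hD
          rw [this, hL2]
          exact div_pos hd hd
        · have : (r₁-s₁)^2 + (r₂-s₂)^2 = D/L^2 := by
            rw [hs₁, hs₂]; field_simp; linear_combination -hD
          rw [this, hL2, div_self (ne_of_gt hd)]
          norm_num
      have step2 : Good f ρ (pt s₁ p₁, pt s₂ p₂) (pt r₁' p₁, pt r₂' p₂) := by
        apply ih
        have hrem : (s₁-r₁')^2 + (s₂-r₂')^2 = (L-1)^2 := by
          have expand : (s₁-r₁')^2 + (s₂-r₂')^2 = (L-1)^2/L^2*D := by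
            rw [hs₁, hs₂]; field_simp; ring
          rw [expand, ← hL2]; field_simp
        rw [hrem]
        have : 0 ≤ L - 1 := by nlinarith [hLgt]
        nlinarith [hLle, this]
      exact step1.trans step2

lemma perp (c₁ c₂ : ℝ) : ∃ d₁ d₂ : ℝ, d₁*c₁ + d₂*c₂ = 0 ∧ d₁^2 + d₂^2 = c₁^2 + c₂^2 + 1 := by
  by_cases h : c₁ = 0 ∧ c₂ = 0
  · exact ⟨1, 0, by rw [h.1, h.2]; ring, by rw [h.1, h.2]; ring⟩
  · have hS : 0 < c₁^2 + c₂^2 := by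
      rcases not_and_or.mp h with h' | h'
      · positivity
      · positivity
    set t := Real.sqrt ((c₁^2+c₂^2+1)/(c₁^2+c₂^2)) with htdef
    have ht2 : t^2 = (c₁^2+c₂^2+1)/(c₁^2+c₂^2) := Real.sq_sqrt (by positivity)
    refine ⟨-t*c₂, t*c₁, by ring, ?_⟩
    have : (-t*c₂)^2 + (t*c₁)^2 = t^2 * (c₁^2+c₂^2) := by ring
    rw [this, ht2]
    field_simp

include hf hρ in
lemma endhop (u₁ u₂ : ℂ) (p₁ p₂ : ℝ)
    (hψ₁ : u₁.im*p₁ + u₂.im*p₂ ≠ 0) (hmn₁ : ¬(u₁.im = -p₁ ∧ u₂.im = -p₂)) :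
    ∃ r₁ r₂ : ℝ, Good f ρ (u₁, u₂) (pt r₁ p₁, pt r₂ p₂) ∧
      Good f ρ (pt r₁ p₁, pt r₂ p₂) (u₁, u₂) := by
  obtain ⟨d₁, d₂, hd, hnorm⟩ := perp (u₁.im - p₁) (u₂.im - p₂)
  have key : (u₁ - pt (u₁.re - d₁) p₁)^2 + (u₂ - pt (u₂.re - d₂) p₂)^2 = 1 := by
    apply Complex.ext
    · simp only [Complex.add_re, Complex.one_re, pow_two, Complex.mul_re, Complex.sub_re,
        Complex.sub_im, pt_re, pt_im]
      linear_combination hnorm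
    · simp only [Complex.add_im, Complex.one_im, pow_two, Complex.mul_im, Complex.sub_re,
        Complex.sub_im, pt_re, pt_im]
      linear_combination 2*hd
  have key' : (pt (u₁.re - d₁) p₁ - u₁)^2 + (pt (u₂.re - d₂) p₂ - u₂)^2 = 1 := by
    linear_combination key
  refine ⟨u₁.re - d₁, u₂.re - d₂, ?_, ?_⟩
  · apply OS f hf ρ hρ
    · rw [key]; exact Complex.one_im
    · rw [key]; norm_num
    · rw [key]; norm_num
    · simpa using hψ₁
    · simpa using hmn₁
  · apply OS f hf ρ hρ
    · rw [key']; exact Complex.one_im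
    · rw [key']; norm_num
    · rw [key']; norm_num
    · simp only [pt_im]
      intro h; apply hψ₁; linarith [h]
    · simp only [pt_im]
      intro h; apply hmn₁
      exact ⟨by linarith [h.1], by linarith [h.2]⟩

end walkstuff

/-- Lemma 1: under the conclusion of Theorem 1, if `φ(X,Y)` is rational and
`ψ(X,Y) ≠ 0`, then `Y ∈ A` implies `X ∈ A` and `Y ∈ B` implies `X ∈ B`. -/
theorem stmt_4 (f : ℂ × ℂ → ℂ × ℂ)
    (hf : ∀ X Y : ℂ × ℂ, (X.1 - Y.1) ^ 2 + (X.2 - Y.2) ^ 2 = 1 →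
      ((f X).1 - (f Y).1) ^ 2 + ((f X).2 - (f Y).2) ^ 2 = 1)
    (h00 : f (0, 0) = (0, 0)) (h10 : f (1, 0) = (1, 0)) (h01 : f (0, 1) = (0, 1))
    (ρ : ℝ →+* ℂ)
    (hρ : ∀ x₁ x₂ : ℂ,
      f (x₁, x₂) = (ρ x₁.re + ρ x₁.im * Complex.I, ρ x₂.re + ρ x₂.im * Complex.I) ∨
      f (x₁, x₂) = (ρ x₁.re - ρ x₁.im * Complex.I, ρ x₂.re - ρ x₂.im * Complex.I))
    (x₁ x₂ y₁ y₂ : ℂ)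
    (hrat : ∃ q : ℚ, (x₁ - y₁) ^ 2 + (x₂ - y₂) ^ 2 = (q : ℂ))
    (hψ : x₁.im * y₁.im + x₂.im * y₂.im ≠ 0) :
    (f (y₁, y₂) = (ρ y₁.re + ρ y₁.im * Complex.I, ρ y₂.re + ρ y₂.im * Complex.I) →
      f (x₁, x₂) = (ρ x₁.re + ρ x₁.im * Complex.I, ρ x₂.re + ρ x₂.im * Complex.I)) ∧
    (f (y₁, y₂) = (ρ y₁.re - ρ y₁.im * Complex.I, ρ y₂.re - ρ y₂.im * Complex.I) →
      f (x₁, x₂) = (ρ x₁.re - ρ x₁.im * Complex.I, ρ x₂.re - ρ x₂.im * Complex.I)) := by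
  have hm : ¬(x₁.im = 0 ∧ x₂.im = 0) := by
    intro h; apply hψ; rw [h.1, h.2]; ring
  have hn : ¬(y₁.im = 0 ∧ y₂.im = 0) := by
    intro h; apply hψ; rw [h.1, h.2]; ring
  -- choose the auxiliary imaginary direction p
  obtain ⟨p₁, p₂, hPm, hQm, hPn, hQn, hp0⟩ :
      ∃ p₁ p₂ : ℝ, (x₁.im*p₁ + x₂.im*p₂ ≠ 0) ∧ (¬(x₁.im = -p₁ ∧ x₂.im = -p₂)) ∧
        (y₁.im*p₁ + y₂.im*p₂ ≠ 0) ∧ (¬(y₁.im = -p₁ ∧ y₂.im = -p₂)) ∧ ¬(p₁ = 0 ∧ p₂ = 0) := by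
    by_cases hyx : y₁.im = -x₁.im ∧ y₂.im = -x₂.im
    · refine ⟨2*x₁.im, 2*x₂.im, ?_, ?_, ?_, ?_, ?_⟩
      · intro h; apply hm
        exact sq_sum_zero (by linear_combination h/2)
      · intro h; apply hm
        exact ⟨by linarith [h.1], by linarith [h.2]⟩
      · rw [hyx.1, hyx.2]
        intro h; apply hm
        exact sq_sum_zero (by linear_combination -h/2)
      · rw [hyx.1, hyx.2]
        intro h; apply hm
        exact ⟨by linarith [h.1], by linarith [h.2]⟩
      · intro h; apply hm
        exact ⟨by linarith [h.1], by linarith [h.2]⟩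
    · refine ⟨x₁.im, x₂.im, ?_, ?_, ?_, ?_, hm⟩
      · intro h; apply hm
        exact sq_sum_zero (by linear_combination h)
      · intro h; apply hm
        exact ⟨by linarith [h.1], by linarith [h.2]⟩
      · intro h; apply hψ; linarith [h]
      · exact hyx
  obtain ⟨r₁, r₂, GX, _⟩ := endhop f hf ρ hρ x₁ x₂ p₁ p₂ hPm hQm
  obtain ⟨w₁, w₂, _, GY⟩ := endhop f hf ρ hρ y₁ y₂ p₁ p₂ hPn hQn
  obtain ⟨k, hk⟩ := exists_nat_ge ((r₁-w₁)^2 + (r₂-w₂)^2)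
  have Gmid : Good f ρ (pt r₁ p₁, pt r₂ p₂) (pt w₁ p₁, pt w₂ p₂) := by
    apply walk f hf ρ hρ p₁ p₂ hp0 k
    nlinarith [hk, sq_nonneg ((k:ℝ))]
  have G : Good f ρ (x₁, x₂) (y₁, y₂) := (GX.trans Gmid).trans GY
  exact G
end

section
/- Let f : ℂ² → ℂ² preserve unit distance, with f((0,0)) = (0,0), f((1,0)) = (1,0), f((0,1)) = (0,1), and let ρ : ℝ → ℂ be a field homomorphism such that for all x₁, x₂ ∈ ℂ, f((x₁,x₂)) equals (ρ(Re x₁)+ρ(Im x₁)·i, ρ(Re x₂)+ρ(Im x₂)·i) or (ρ(Re x₁)−ρ(Im x₁)·i, ρ(Re x₂)−ρ(Im x₂)·i). Define A = {(x₁,x₂) ∈ ℂ² : f((x₁,x₂)) = (ρ(Re x₁)+ρ(Im x₁)·i, ρ(Re x₂)+ρ(Im x₂)·i)} and B = {(x₁,x₂) ∈ ℂ² : f((x₁,x₂)) = (ρ(Re x₁)−ρ(Im x₁)·i, ρ(Re x₂)−ρ(Im x₂)·i)}. Then for every X ∈ ℂ² \ ℝ²: if (i,i) ∈ A then X ∈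 A, and if (i,i) ∈ B then X ∈ B. -/
/-!
Let `σ` be the ring embedding `x ↦ ρ (re x) + ρ (im x) * i` (or its conjugate), so that at every
point `f X = σ X` or `f X = σ X̄`. If `f P = σ P` and `φ(P, Q) = 1`, then `f Q = σ Q̄` would give
`σ (φ(P, Q̄)) = 1`, hence `φ(P, Q̄) = φ(P, Q)`, which forces `Im P ⊥ Im Q` and `Im Q ⊥ Re (P - Q)`.
So the `σ`-branch propagates along unit edges avoiding these relations. From `(i, i)` two such
edges reach the imaginary parts of `X`; translations by real unit vectors, which generate `ℝ²` as
an additive monoid, then adjust the real parts while staying off `ℝ²`.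
-/

open Complex

def Complex.liftRingHom {A : Type*} [CommRing A] (ρ : ℝ →+* A) (j : A) (hj : j * j = -1) :
    ℂ →+* A where
  toFun x := ρ x.re + ρ x.im * j
  map_one' := by simp
  map_mul' x y := by
    simp only [mul_re, mul_im, map_sub, map_add, map_mul]
    linear_combination -(ρ x.im * ρ y.im) * hj
  map_zero' := by simp
  map_add' x y := by
    simp only [add_re, add_im, map_add]
    ring

@[simp]
lemma Complex.liftRingHom_apply {A : Type*} [CommRing A] (ρ : ℝ →+* A) (j : A) (hj : j * j = -1)
    (x : ℂ) : liftRingHom ρ j hj x = ρ x.re + ρ x.im * j := rfl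

lemma Complex.liftRingHom_star {A : Type*} [CommRing A] (ρ : ℝ →+* A) {j j' : A}
    (hj : j * j = -1) (hj' : j' * j' = -1) (h : j + j' = 0) (x : ℂ) :
    liftRingHom ρ j' hj' x = liftRingHom ρ j hj (star x) := by
  simp [eq_neg_of_add_eq_zero_right h]

def sqDist {R : Type*} [CommRing R] (X Y : R × R) : R := (X.1 - Y.1) ^ 2 + (X.2 - Y.2) ^ 2

def PreservesUnitDist {R : Type*} [CommRing R] (f : R × R → R × R) : Prop :=
  ∀ X Y, sqDist X Y = 1 → sqDist (f X) (f Y) = 1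

lemma map_sqDist {R S : Type*} [CommRing R] [CommRing S] (σ : R →+* S) (X Y : R × R) :
    σ (sqDist X Y) = sqDist (Prod.map σ σ X) (Prod.map σ σ Y) := by
  simp [sqDist]

lemma sqDist_star_eq (P Q : ℂ × ℂ) (h : sqDist P (star Q) = sqDist P Q) :
    P.1.im * Q.1.im + P.2.im * Q.2.im = 0 ∧
      Q.1.im * (P.1.re - Q.1.re) + Q.2.im * (P.2.re - Q.2.re) = 0 := by
  obtain ⟨hre, him⟩ := Complex.ext_iff.mp h
  simp only [sqDist, pow_two, Prod.fst_star, Prod.snd_star, add_re, add_im, sub_re, sub_im,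
    mul_re, mul_im, star_def, conj_re, conj_im] at hre him
  exact ⟨by linear_combination -hre / 4, by linear_combination him / 4⟩

theorem AddSubmonoid.closure_unitCircle :
    AddSubmonoid.closure {v : ℝ × ℝ | v.1 ^ 2 + v.2 ^ 2 = 1} = ⊤ := by
  set M := AddSubmonoid.closure {v : ℝ × ℝ | v.1 ^ 2 + v.2 ^ 2 = 1}
  have unit_mem {v : ℝ × ℝ} (hv : v.1 ^ 2 + v.2 ^ 2 = 1) : v ∈ M := AddSubmonoid.subset_closure hv
  -- an axis segment of length at most 2 is the base of an isosceles triangle with unit legs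
  have short_mem {s : ℝ} (hs : |s| ≤ 2) : (s, 0) ∈ M ∧ (0, s) ∈ M := by
    set h := √(1 - (s / 2) ^ 2)
    have hh : (s / 2) ^ 2 + h ^ 2 = 1 := by
      rw [Real.sq_sqrt (by nlinarith [sq_abs s, abs_nonneg s])]; ring
    constructor
    · convert M.add_mem (unit_mem (v := (s / 2, h)) hh)
        (unit_mem (v := (s / 2, -h)) (by simpa using hh)) using 1
      ext <;> simp
    · convert M.add_mem (unit_mem (v := (h, s / 2)) (by linarith))
        (unit_mem (v := (-h, s / 2)) (by simp; linarith)) using 1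
      ext <;> simp
  have axes_mem (s : ℝ) : (s, 0) ∈ M ∧ (0, s) ∈ M := by
    obtain ⟨n, hn⟩ := exists_nat_gt |s|
    have hn0 : (0 : ℝ) < n := (abs_nonneg s).trans_lt hn
    have hsn : |s / n| ≤ 2 := by
      rw [abs_div, Nat.abs_cast, div_le_iff₀ hn0]; linarith
    obtain ⟨h₁, h₂⟩ := short_mem hsn
    constructor
    · convert M.nsmul_mem h₁ n using 1
      ext <;> simp [mul_div_cancel₀ _ hn0.ne']
    · convert M.nsmul_mem h₂ n using 1
      ext <;> simp [mul_div_cancel₀ _ hn0.ne']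
  refine eq_top_iff.mpr fun v _ => ?_
  simpa using M.add_mem (axes_mem v.1).1 (axes_mem v.2).2

section UnitDistance

variable {f : ℂ × ℂ → ℂ × ℂ} {σ τ : ℂ →+* ℂ}

lemma eq_map_of_sqDist_eq_one
    (hf : PreservesUnitDist f)
    (hσ : ∀ X, f X = Prod.map σ σ X ∨ f X = Prod.map τ τ X) (hτ : ∀ x, τ x = σ (star x))
    {P Q : ℂ × ℂ} (hP : f P = Prod.map σ σ P) (hPQ : sqDist P Q = 1)
    (hgood : P.1.im * Q.1.im + P.2.im * Q.2.im ≠ 0 ∨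
      Q.1.im * (P.1.re - Q.1.re) + Q.2.im * (P.2.re - Q.2.re) ≠ 0) :
    f Q = Prod.map σ σ Q := by
  refine (hσ Q).resolve_right fun hQ => ?_
  replace hQ : f Q = Prod.map σ σ (star Q) := hQ.trans (Prod.ext (hτ _) (hτ _))
  have hPQ' : sqDist P (star Q) = 1 := σ.injective <| by
    rw [map_sqDist, ← hP, ← hQ, hf P Q hPQ, map_one]
  obtain ⟨h₁, h₂⟩ := sqDist_star_eq P Q (hPQ'.trans hPQ.symm)
  exact hgood.elim (· h₁) (· h₂)

lemma eq_map_add_real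
    (hf : PreservesUnitDist f)
    (hσ : ∀ X, f X = Prod.map σ σ X ∨ f X = Prod.map τ τ X) (hτ : ∀ x, τ x = σ (star x))
    (v : ℝ × ℝ) {X : ℂ × ℂ} (hX : ¬(X.1.im = 0 ∧ X.2.im = 0)) (hfX : f X = Prod.map σ σ X) :
    f (X + ((v.1 : ℂ), (v.2 : ℂ))) = Prod.map σ σ (X + ((v.1 : ℂ), (v.2 : ℂ))) := by
  have hv : v ∈ AddSubmonoid.closure {v : ℝ × ℝ | v.1 ^ 2 + v.2 ^ 2 = 1} := by
    rw [AddSubmonoid.closure_unitCircle]; trivial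
  induction hv using AddSubmonoid.closure_induction generalizing X with
  | mem v hv =>
    refine eq_map_of_sqDist_eq_one hf hσ hτ hfX ?_ (.inl ?_)
    · simp only [sqDist, Prod.fst_add, Prod.snd_add, sub_add_cancel_left, neg_sq]
      exact_mod_cast hv
    · simp only [Prod.fst_add, Prod.snd_add, add_im, ofReal_im, add_zero]
      contrapose! hX
      constructor <;> nlinarith
  | zero => simpa [Prod.mk_zero_zero] using hfX
  | add v w _ _ hv hw =>
    simpa [add_assoc] using hw (by simpa using hX) (hv hX hfX)

theorem eq_map_of_not_real
    (hf : PreservesUnitDist f)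
    (hσ : ∀ X, f X = Prod.map σ σ X ∨ f X = Prod.map τ τ X) (hτ : ∀ x, τ x = σ (star x))
    (hI : f (I, I) = (σ I, σ I)) (X : ℂ × ℂ) (hX : ¬(X.1.im = 0 ∧ X.2.im = 0)) :
    f X = Prod.map σ σ X := by
  set a := X.1.im
  set b := X.2.im
  set u₁ := √(1 + (a - 1) ^ 2)
  set u₂ := √(1 + (b - 1) ^ 2)
  have hu₁ : (u₁ : ℂ) ^ 2 = 1 + (a - 1) ^ 2 := by norm_cast; exact Real.sq_sqrt (by positivity)
  have hu₂ : (u₂ : ℂ) ^ 2 = 1 + (b - 1) ^ 2 := by norm_cast; exact Real.sq_sqrt (by positivity)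
  have hu₁_pos : 0 < u₁ := Real.sqrt_pos.mpr (by positivity)
  have hu₂_pos : 0 < u₂ := Real.sqrt_pos.mpr (by positivity)
  -- move the imaginary parts from `(1, 1)` to `(a, 1)`, then to `(a, b)`
  set P : ℂ × ℂ := (a * I, u₁ + I)
  set Q : ℂ × ℂ := (a * I + u₂, u₁ + b * I)
  have hP : f P = Prod.map σ σ P := by
    refine eq_map_of_sqDist_eq_one hf hσ hτ hI ?_ (.inr ?_)
    · simp only [sqDist, P]
      linear_combination hu₁ + ((a : ℂ) - 1) ^ 2 * I_sq
    · simp [P, hu₁_pos.ne']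
  have hQ : f Q = Prod.map σ σ Q := by
    refine eq_map_of_sqDist_eq_one hf hσ hτ hP ?_ ?_
    · simp only [sqDist, P, Q]
      linear_combination hu₂ + ((b : ℂ) - 1) ^ 2 * I_sq
    · rcases eq_or_ne a 0 with ha | ha
      · left
        simpa [P, Q, ha] using hX
      · right
        simp [P, Q, ha, hu₂_pos.ne']
  have hQX : X = Q + (((X.1.re - u₂ : ℝ) : ℂ), ((X.2.re - u₁ : ℝ) : ℂ)) := by
    ext
    · simp only [Q, a, Prod.fst_add]; push_cast; linear_combination (re_add_im X.1).symm
    · simp only [Q, b, Prod.snd_add]; push_cast; linear_combination (re_add_im X.2).symm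
  rw [hQX]
  exact eq_map_add_real hf hσ hτ (X.1.re - u₂, X.2.re - u₁) (by simpa [Q] using hX) hQ

end UnitDistance

theorem stmt_6_general (f : ℂ × ℂ → ℂ × ℂ)
    (hf : ∀ X Y : ℂ × ℂ, (X.1 - Y.1) ^ 2 + (X.2 - Y.2) ^ 2 = 1 →
      ((f X).1 - (f Y).1) ^ 2 + ((f X).2 - (f Y).2) ^ 2 = 1)
    (ρ : ℝ →+* ℂ)
    (hρ : ∀ x₁ x₂ : ℂ,
      f (x₁, x₂) = (ρ x₁.re + ρ x₁.im * Complex.I, ρ x₂.re + ρ x₂.im * Complex.I) ∨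
      f (x₁, x₂) = (ρ x₁.re - ρ x₁.im * Complex.I, ρ x₂.re - ρ x₂.im * Complex.I))
    (x₁ x₂ : ℂ) (hX : ¬(x₁.im = 0 ∧ x₂.im = 0)) :
    (f (Complex.I, Complex.I) =
        (ρ (Complex.I.re) + ρ (Complex.I.im) * Complex.I,
         ρ (Complex.I.re) + ρ (Complex.I.im) * Complex.I) →
      f (x₁, x₂) = (ρ x₁.re + ρ x₁.im * Complex.I, ρ x₂.re + ρ x₂.im * Complex.I)) ∧
    (f (Complex.I, Complex.I) =
        (ρ (Complex.I.re) - ρ (Complex.I.im) * Complex.I,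
         ρ (Complex.I.re) - ρ (Complex.I.im) * Complex.I) →
      f (x₁, x₂) = (ρ x₁.re - ρ x₁.im * Complex.I, ρ x₂.re - ρ x₂.im * Complex.I)) := by
  let σ := liftRingHom ρ I I_mul_I
  let σ' := liftRingHom ρ (-I) (by rw [neg_mul_neg, I_mul_I])
  have hσ' (x : ℂ) : σ' x = ρ x.re - ρ x.im * I := by simp [σ', sub_eq_add_neg]
  have hρ' : ∀ X, f X = Prod.map σ σ X ∨ f X = Prod.map σ' σ' X := by
    rintro ⟨x, y⟩
    rw [Prod.map_apply, Prod.map_apply, hσ', hσ']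
    exact hρ x y
  constructor
  · exact fun hI => eq_map_of_not_real hf hρ'
      (liftRingHom_star ρ _ _ (add_neg_cancel I)) hI (x₁, x₂) hX
  · intro hI
    simp only [← hσ'] at hI ⊢
    exact eq_map_of_not_real hf (fun X => (hρ' X).symm)
      (liftRingHom_star ρ _ _ (neg_add_cancel I)) hI (x₁, x₂) hX

/-- Lemma 3: under the conclusion of Theorem 1, for every `X ∈ ℂ² \ ℝ²`,
`(i,i) ∈ A` implies `X ∈ A`, and `(i,i) ∈ B` implies `X ∈ B`. -/
theorem stmt_6 (f : ℂ × ℂ → ℂ × ℂ)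
    (hf : ∀ X Y : ℂ × ℂ, (X.1 - Y.1) ^ 2 + (X.2 - Y.2) ^ 2 = 1 →
      ((f X).1 - (f Y).1) ^ 2 + ((f X).2 - (f Y).2) ^ 2 = 1)
    (h00 : f (0, 0) = (0, 0)) (h10 : f (1, 0) = (1, 0)) (h01 : f (0, 1) = (0, 1))
    (ρ : ℝ →+* ℂ)
    (hρ : ∀ x₁ x₂ : ℂ,
      f (x₁, x₂) = (ρ x₁.re + ρ x₁.im * Complex.I, ρ x₂.re + ρ x₂.im * Complex.I) ∨
      f (x₁, x₂) = (ρ x₁.re - ρ x₁.im * Complex.I, ρ x₂.re - ρ x₂.im * Complex.I))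
    (x₁ x₂ : ℂ) (hX : ¬(x₁.im = 0 ∧ x₂.im = 0)) :
    (f (Complex.I, Complex.I) =
        (ρ (Complex.I.re) + ρ (Complex.I.im) * Complex.I,
         ρ (Complex.I.re) + ρ (Complex.I.im) * Complex.I) →
      f (x₁, x₂) = (ρ x₁.re + ρ x₁.im * Complex.I, ρ x₂.re + ρ x₂.im * Complex.I)) ∧
    (f (Complex.I, Complex.I) =
        (ρ (Complex.I.re) - ρ (Complex.I.im) * Complex.I,
         ρ (Complex.I.re) - ρ (Complex.I.im) * Complex.I) →
      f (x₁, x₂) = (ρ x₁.re - ρ x₁.im * Complex.I, ρ x₂.re - ρ x₂.im * Complex.I)) :=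
  stmt_6_general f hf ρ hρ x₁ x₂ hX
end

section
/- If f : ℂ² → ℂ² satisfies φ(f(X),f(Y)) = φ(X,Y) for all X, Y ∈ ℂ², then f is an affine mapping with orthogonal linear part, i.e., there exist c ∈ ℂ² and a ℂ-linear map L : ℂ² → ℂ² with (L(X))₁² + (L(X))₂² = X₁² + X₂² for all X ∈ ℂ², such that f(X) = L(X) + c for all X ∈ ℂ². -/
/-!
Translating so that `f 0 = 0`, the map `g X = f X - f 0` preserves `X₁² + X₂²`, hence, by
polarization, the symmetric bilinear form `X₁Y₁ + X₂Y₂`. So `u = g (1, 0)` and `v = g (0, 1)` are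
orthonormal, and an orthonormal pair in the plane is a basis, so `g X` is determined by its
inner products with `u` and `v`; these are `X₁` and `X₂`, which forces `g X = X₁ • u + X₂ • v`.
-/

namespace PlaneForm

variable {R : Type*} [CommRing R]

def dot (X Y : R × R) : R := X.1 * Y.1 + X.2 * Y.2

def sqNorm (X : R × R) : R := X.1 ^ 2 + X.2 ^ 2

theorem sqNorm_sub (X Y : R × R) : sqNorm (X - Y) = sqNorm X + sqNorm Y - 2 * dot X Y := by
  simp only [sqNorm, dot, Prod.fst_sub, Prod.snd_sub]
  ring

theorem dot_eq_dot_of_sqNorm_eq [IsDomain R] [NeZero (2 : R)] {X Y X' Y' : R × R}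
    (hX : sqNorm X = sqNorm X') (hY : sqNorm Y = sqNorm Y')
    (hXY : sqNorm (X - Y) = sqNorm (X' - Y')) : dot X Y = dot X' Y' := by
  refine mul_left_cancel₀ (two_ne_zero (α := R)) ?_
  rw [sqNorm_sub, sqNorm_sub] at hXY
  linear_combination hX + hY - hXY

theorem eq_zero_of_dot_eq_zero [IsDomain R] {u v r : R × R} (huv : u.1 * v.2 - u.2 * v.1 ≠ 0)
    (hu : dot r u = 0) (hv : dot r v = 0) : r = 0 := by
  unfold dot at hu hv
  have h₁ : r.1 * (u.1 * v.2 - u.2 * v.1) = 0 := by linear_combination v.2 * hu - u.2 * hv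
  have h₂ : r.2 * (u.1 * v.2 - u.2 * v.1) = 0 := by linear_combination u.1 * hv - v.1 * hu
  ext
  · exact (mul_eq_zero.mp h₁).resolve_right huv
  · exact (mul_eq_zero.mp h₂).resolve_right huv

theorem eq_dot_smul_add_dot_smul [IsDomain R] {u v : R × R} (hu : sqNorm u = 1)
    (hv : sqNorm v = 1) (huv : dot u v = 0) (w : R × R) :
    w = dot w u • u + dot w v • v := by
  unfold sqNorm at hu hv
  -- Lagrange's identity `(u·u)(v·v) - (u·v)² = det(u, v)²`.
  have hdet : (u.1 * v.2 - u.2 * v.1) ^ 2 = 1 := by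
    unfold dot at huv
    linear_combination v.1 ^ 2 * hu + v.2 ^ 2 * hu + hv - (u.1 * v.1 + u.2 * v.2) * huv
  rw [← sub_eq_zero, sub_add_eq_sub_sub]
  refine eq_zero_of_dot_eq_zero (u := u) (v := v) (fun h ↦ by simp [h] at hdet) ?_ ?_
  all_goals
    unfold dot at huv ⊢
    simp only [Prod.fst_sub, Prod.snd_sub, Prod.smul_fst, Prod.smul_snd, smul_eq_mul]
  · linear_combination (-(w.1 * u.1 + w.2 * u.2)) * hu - (w.1 * v.1 + w.2 * v.2) * huv
  · linear_combination (-(w.1 * v.1 + w.2 * v.2)) * hv - (w.1 * u.1 + w.2 * u.2) * huv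

theorem exists_linearMap_eq_of_sqNorm_sub_eq [IsDomain R] [NeZero (2 : R)] {g : R × R → R × R}
    (hg : ∀ X Y, sqNorm (g X - g Y) = sqNorm (X - Y)) (hg0 : g 0 = 0) :
    ∃ L : (R × R) →ₗ[R] R × R, ∀ X, g X = L X := by
  have hnorm (X : R × R) : sqNorm (g X) = sqNorm X := by simpa [hg0] using hg X 0
  have hdot (X Y : R × R) : dot (g X) (g Y) = dot X Y :=
    dot_eq_dot_of_sqNorm_eq (hnorm X) (hnorm Y) (hg X Y)
  refine ⟨(LinearMap.toSpanSingleton R _ (g (1, 0))).coprod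
    (LinearMap.toSpanSingleton R _ (g (0, 1))), fun X ↦ ?_⟩
  rw [eq_dot_smul_add_dot_smul (u := g (1, 0)) (v := g (0, 1)) ?_ ?_ ?_ (g X), hdot, hdot]
  · simp [dot]
  · rw [hnorm]; simp [sqNorm]
  · rw [hnorm]; simp [sqNorm]
  · rw [hdot]; simp [dot]

end PlaneForm

/-- A map `f : ℂ² → ℂ²` preserving `φ` (all distances) is an affine mapping with
orthogonal linear part. -/
theorem stmt_11 (f : ℂ × ℂ → ℂ × ℂ)
    (hf : ∀ X Y : ℂ × ℂ,
      ((f X).1 - (f Y).1) ^ 2 + ((f X).2 - (f Y).2) ^ 2 =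
        (X.1 - Y.1) ^ 2 + (X.2 - Y.2) ^ 2) :
    ∃ L : (ℂ × ℂ) →ₗ[ℂ] (ℂ × ℂ), ∃ c : ℂ × ℂ,
      (∀ X : ℂ × ℂ, (L X).1 ^ 2 + (L X).2 ^ 2 = X.1 ^ 2 + X.2 ^ 2) ∧
      (∀ X : ℂ × ℂ, f X = L X + c) := by
  have hg (X Y : ℂ × ℂ) :
      PlaneForm.sqNorm ((f X - f 0) - (f Y - f 0)) = PlaneForm.sqNorm (X - Y) := by
    simpa [PlaneForm.sqNorm] using hf X Y
  obtain ⟨L, hL⟩ := PlaneForm.exists_linearMap_eq_of_sqNorm_sub_eq hg (sub_self (f 0))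
  refine ⟨L, f 0, fun X ↦ ?_, fun X ↦ ?_⟩
  · simpa [← hL, PlaneForm.sqNorm] using hg X 0
  · rw [← hL, sub_add_cancel]
end

section
/- Let K be a field with (2 : K) ≠ 0, let i, j ∈ K satisfy i² + 1 = 0 and j² + 1 = 0, and let a ∈ K with a ≠ 0. Then the linear maps f₁, f₂ : K² → K² defined by f₁((x₁,x₂)) = ((a/2 + 1/(2a))·x₁ + (a/2 − 1/(2a))·j·x₂, −(a/2 − 1/(2a))·i·x₁ − (a/2 + 1/(2a))·i·j·x₂) and f₂((x₁,x₂)) = ((a/2 + 1/(2a))·x₁ − (a/2 − 1/(2a))·j·x₂, −(a/2 − 1/(2a))·i·x₁ + (a/2 + 1/(2a))·i·j·x₂) are orthogonal, i.e., for every (x₁,x₂) ∈ K², writing f₁((x₁,x₂)) = (u₁,u₂) and f₂((x₁,x₂)) = (v₁,v₂), one has u₁² + u₂² = x₁² + x₂² and v₁² + v₂² = x₁² + x₂². -/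
/-! With `c = a/2 + 1/(2a)` and `s = a/2 - 1/(2a)` one has `c² - s² = 1`, and the square roots
`i`, `j` of `-1` turn the hyperbolic rotation with parameters `c`, `s` into an orthogonal map.
The map `f₂` is `f₁` with `j` replaced by the other square root `-j`. -/

theorem sq_add_sq_eq_of_sq_sub_sq_eq_one {R : Type*} [CommRing R] {i j c s : R}
    (hi : i ^ 2 + 1 = 0) (hj : j ^ 2 + 1 = 0) (hcs : c ^ 2 - s ^ 2 = 1) (x y : R) :
    (c * x + s * j * y) ^ 2 + (-s * i * x - c * i * j * y) ^ 2 = x ^ 2 + y ^ 2 := by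
  linear_combination (s * x + c * j * y) ^ 2 * hi + (s ^ 2 - c ^ 2) * y ^ 2 * hj +
    (x ^ 2 + y ^ 2) * hcs

theorem half_add_inv_sq_sub_half_sub_inv_sq {K : Type*} [Field K] (h2 : (2 : K) ≠ 0) {a : K}
    (ha : a ≠ 0) : (a / 2 + 1 / (2 * a)) ^ 2 - (a / 2 - 1 / (2 * a)) ^ 2 = 1 := by
  field_simp
  ring

/-- The linear maps `f₁` and `f₂` from the proof of Theorem 4 are orthogonal. -/
theorem stmt_14 {K : Type*} [Field K] (h2 : (2 : K) ≠ 0)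
    (i j : K) (hi : i ^ 2 + 1 = 0) (hj : j ^ 2 + 1 = 0)
    (a : K) (ha : a ≠ 0) :
    ∀ x₁ x₂ : K,
      ((a / 2 + 1 / (2 * a)) * x₁ + (a / 2 - 1 / (2 * a)) * j * x₂) ^ 2 +
        (-(a / 2 - 1 / (2 * a)) * i * x₁ - (a / 2 + 1 / (2 * a)) * i * j * x₂) ^ 2 =
        x₁ ^ 2 + x₂ ^ 2 ∧
      ((a / 2 + 1 / (2 * a)) * x₁ - (a / 2 - 1 / (2 * a)) * j * x₂) ^ 2 +
        (-(a / 2 - 1 / (2 * a)) * i * x₁ + (a / 2 + 1 / (2 * a)) * i * j * x₂) ^ 2 =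
        x₁ ^ 2 + x₂ ^ 2 := by
  intro x₁ x₂
  have hcs := half_add_inv_sq_sub_half_sub_inv_sq h2 ha
  have hj' : (-j) ^ 2 + 1 = 0 := by rwa [neg_sq]
  exact ⟨sq_add_sq_eq_of_sq_sub_sq_eq_one hi hj hcs x₁ x₂,
    by linear_combination sq_add_sq_eq_of_sq_sub_sq_eq_one hi hj' hcs x₁ x₂⟩
end
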